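/- arXiv:1701.01667 — 5 statements merged into one kernel-verified Lean document; each statement's English description precedes it below -/
import Mathlib

section
/- Let (p_k)_{k∈ℤ} be defined by p_1 = 2/3, p_k = 0 for k = 0 and for k ≥ 2, and p_{−k} = 2·(2k−2)! / (4^k · (k−1)! · (k+1)!) for k ≥ 1. Then (p_k) is a probability distribution on ℤ (i.e. Σ_{k∈ℤ} p_k = 1), it is centered (Σ_{k∈ℤ} k·p_k = 0), and its left tail satisfies p_{−k} ~ 1/(2√π · k^{5/2}) as k → ∞, i.e. lim_{k→∞} k^{5/2} p_{−k} = 1/(2√π). -/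
open Filter

/-- The step distribution of the peeling random walk for type II triangulations:
`p 1 = 2/3`, `p k = 0` for `k = 0` and `k ≥ 2`, and
`p (-k) = 2 (2k-2)! / (4^k (k-1)! (k+1)!)` for `k ≥ 1`. -/
noncomputable def pStep : ℤ → ℝ := fun k =>
  if k = 1 then 2 / 3
  else if k ≤ -1 then
    2 * (Nat.factorial (2 * (-k).toNat - 2) : ℝ) /
      (4 ^ (-k).toNat * (Nat.factorial ((-k).toNat - 1) : ℝ) *
        (Nat.factorial ((-k).toNat + 1) : ℝ))
  else 0

namespace PStepAux

open Real Topology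

noncomputable def bSeq (n : ℕ) : ℝ :=
  (Nat.factorial (2*n)) / (4^n * (Nat.factorial n)^2)

noncomputable def qSeq (n : ℕ) : ℝ :=
  2 * (Nat.factorial (2*n)) / (4^(n+1) * (Nat.factorial n) * (Nat.factorial (n+2)))

noncomputable def cSeq (n : ℕ) : ℝ :=
  (Nat.factorial (2*n)) / (3 * 4^n * (Nat.factorial n) * (Nat.factorial (n+1)))

noncomputable def RSeq (n : ℕ) : ℝ :=
  (3*n+2) * (Nat.factorial (2*n)) / (3 * 4^n * (Nat.factorial n) * (Nat.factorial (n+1)))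

lemma fact_ne (n : ℕ) : ((Nat.factorial n : ℝ)) ≠ 0 :=
  Nat.cast_ne_zero.mpr (Nat.factorial_ne_zero n)

lemma b_nonneg (n : ℕ) : 0 ≤ bSeq n := by unfold bSeq; positivity
lemma q_nonneg (n : ℕ) : 0 ≤ qSeq n := by unfold qSeq; positivity
lemma c_nonneg (n : ℕ) : 0 ≤ cSeq n := by unfold cSeq; positivity
lemma R_nonneg (n : ℕ) : 0 ≤ RSeq n := by unfold RSeq; positivity

lemma q_telescope (n : ℕ) : qSeq n = cSeq n - cSeq (n+1) := by
  unfold qSeq cSeq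
  have h1 : 2*(n+1) = (2*n+1)+1 := by ring
  rw [h1, Nat.factorial_succ ((2*n+1)), Nat.factorial_succ (2*n),
    Nat.factorial_succ (n+1), Nat.factorial_succ n]
  have := fact_ne n
  have := fact_ne (2*n)
  have h4 : (4:ℝ)^n ≠ 0 := by positivity
  push_cast
  field_simp
  try ring
  try tauto

lemma R_telescope (n : ℕ) : ((n:ℝ)+1) * qSeq n = RSeq n - RSeq (n+1) := by
  unfold qSeq RSeq
  have h1 : 2*(n+1) = (2*n+1)+1 := by ring
  rw [h1, Nat.factorial_succ ((2*n+1)), Nat.factorial_succ (2*n),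
    Nat.factorial_succ (n+1), Nat.factorial_succ n]
  have := fact_ne n
  have := fact_ne (2*n)
  have h4 : (4:ℝ)^n ≠ 0 := by positivity
  push_cast
  field_simp
  try ring
  try tauto

lemma q_eq_b (n : ℕ) : qSeq n = bSeq n / (2*((n:ℝ)+1)*((n:ℝ)+2)) := by
  unfold qSeq bSeq
  rw [Nat.factorial_succ (n+1), Nat.factorial_succ n]
  have := fact_ne n
  have := fact_ne (2*n)
  have h4 : (4:ℝ)^n ≠ 0 := by positivity
  push_cast
  field_simp
  try ring
  try tauto

lemma c_eq_b (n : ℕ) : cSeq n = bSeq n / (3*((n:ℝ)+1)) := by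
  unfold cSeq bSeq
  rw [Nat.factorial_succ n]
  have := fact_ne n
  have := fact_ne (2*n)
  have h4 : (4:ℝ)^n ≠ 0 := by positivity
  push_cast
  field_simp
  try ring
  try tauto

lemma R_eq_b (n : ℕ) : RSeq n = bSeq n * ((3*(n:ℝ)+2) / (3*((n:ℝ)+1))) := by
  unfold RSeq bSeq
  rw [Nat.factorial_succ n]
  have := fact_ne n
  have := fact_ne (2*n)
  have h4 : (4:ℝ)^n ≠ 0 := by positivity
  push_cast
  field_simp
  try ring
  try tauto

lemma sqrt_mul_b (n : ℕ) (hn : 1 ≤ n) :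
    Real.sqrt n * bSeq n = Stirling.stirlingSeq (2*n) / (Stirling.stirlingSeq n)^2 := by
  have hn0 : (0:ℝ) < n := by exact_mod_cast hn
  unfold Stirling.stirlingSeq bSeq
  have hs : Real.sqrt (2*((2*n:ℕ):ℝ)) = 2 * Real.sqrt (n:ℝ) := by
    push_cast
    rw [show (2:ℝ)*(2*(n:ℝ)) = 2^2*(n:ℝ) by ring, Real.sqrt_mul (by positivity),
      Real.sqrt_sq (by norm_num)]
  have hpow : (((2*n:ℕ):ℝ)/Real.exp 1)^(2*n) = 4^n * (((n:ℝ)/Real.exp 1)^n)^2 := by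
    push_cast
    rw [show (2*(n:ℝ))/Real.exp 1 = 2 * ((n:ℝ)/Real.exp 1) by ring, mul_pow]
    rw [pow_mul 2 2 n, pow_mul' _ 2 n]
    norm_num
  rw [hs, hpow]
  set P := ((n:ℝ)/Real.exp 1)^n with hP
  rw [div_pow (Nat.factorial n : ℝ) (Real.sqrt (2*(n:ℝ)) * P) 2, mul_pow]
  have hsq : Real.sqrt (2*(n:ℝ)) ^ 2 = 2*(n:ℝ) := Real.sq_sqrt (by positivity)
  rw [hsq]
  have h2 : ((n:ℝ)/Real.exp 1)^n ≠ 0 := by positivity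
  have h3 : Real.sqrt (n:ℝ) ≠ 0 := by positivity
  have hself : Real.sqrt (n:ℝ) * Real.sqrt (n:ℝ) = (n:ℝ) := Real.mul_self_sqrt hn0.le
  have := fact_ne n
  have := fact_ne (2*n)
  have h4 : (4:ℝ)^n ≠ 0 := by positivity
  have hPne : P ≠ 0 := h2
  field_simp
  ring_nf
  rw [Real.sq_sqrt hn0.le]

lemma tendsto_sqrt_b :
    Tendsto (fun n : ℕ => Real.sqrt n * bSeq n) atTop (𝓝 (1 / Real.sqrt π)) := by
  have hπ : Real.sqrt π ≠ 0 := by positivity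
  have h2n : Tendsto (fun n : ℕ => 2*n) atTop atTop :=
    tendsto_atTop_mono (fun n => by simp [Nat.le_mul_of_pos_left n two_pos]) tendsto_id
  have h1 : Tendsto (fun n : ℕ => Stirling.stirlingSeq (2*n) / (Stirling.stirlingSeq n)^2)
      atTop (𝓝 (Real.sqrt π / (Real.sqrt π)^2)) :=
    (Stirling.tendsto_stirlingSeq_sqrt_pi.comp h2n).div
      (Stirling.tendsto_stirlingSeq_sqrt_pi.pow 2) (by positivity)
  have h1' : Real.sqrt π / (Real.sqrt π)^2 = 1/Real.sqrt π := by
    rw [pow_two, ← div_div, div_self hπ]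
  rw [h1'] at h1
  exact h1.congr' (by filter_upwards [eventually_ge_atTop 1] with n hn
    using (sqrt_mul_b n hn).symm)

lemma tendsto_b_zero : Tendsto bSeq atTop (𝓝 0) := by
  have hinv : Tendsto (fun n : ℕ => (Real.sqrt n)⁻¹) atTop (𝓝 0) := by
    have := (tendsto_one_div_atTop_nhds_zero_nat).sqrt
    rw [Real.sqrt_zero] at this
    refine this.congr fun n => ?_
    rw [one_div, Real.sqrt_inv]
  have h := tendsto_sqrt_b.mul hinv
  rw [mul_zero] at h
  refine h.congr' ?_
  filter_upwards [eventually_ge_atTop 1] with n hn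
  have h3 : Real.sqrt (n:ℝ) ≠ 0 := by
    have : (0:ℝ) < n := by exact_mod_cast hn
    positivity
  rw [mul_comm (Real.sqrt n) (bSeq n), mul_assoc, mul_inv_cancel₀ h3, mul_one]

lemma c_le_b (n : ℕ) : cSeq n ≤ bSeq n := by
  rw [c_eq_b]
  have h0 : (0:ℝ) ≤ n := Nat.cast_nonneg n
  exact div_le_self (b_nonneg n) (by linarith)

lemma R_le_b (n : ℕ) : RSeq n ≤ bSeq n := by
  rw [R_eq_b]
  have h0 : (0:ℝ) ≤ n := Nat.cast_nonneg n
  have : (3*(n:ℝ)+2) / (3*((n:ℝ)+1)) ≤ 1 := by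
    rw [div_le_one (by linarith)]
    linarith
  exact mul_le_of_le_one_right (b_nonneg n) this

lemma tendsto_c_zero : Tendsto cSeq atTop (𝓝 0) :=
  squeeze_zero c_nonneg c_le_b tendsto_b_zero

lemma tendsto_R_zero : Tendsto RSeq atTop (𝓝 0) :=
  squeeze_zero R_nonneg R_le_b tendsto_b_zero

lemma c_zero : cSeq 0 = 1/3 := by
  unfold cSeq
  norm_num [Nat.factorial]

lemma R_zero : RSeq 0 = 2/3 := by
  unfold RSeq
  norm_num [Nat.factorial]

lemma sum_q (n : ℕ) : ∑ i ∈ Finset.range n, qSeq i = 1/3 - cSeq n := by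
  rw [Finset.sum_congr rfl (fun i _ => q_telescope i), Finset.sum_range_sub' cSeq, c_zero]

lemma sum_nq (n : ℕ) :
    ∑ i ∈ Finset.range n, ((i:ℝ)+1) * qSeq i = 2/3 - RSeq n := by
  rw [Finset.sum_congr rfl (fun i _ => R_telescope i), Finset.sum_range_sub' RSeq, R_zero]

lemma hasSum_q : HasSum qSeq (1/3) := by
  have hsum : Summable qSeq :=
    summable_of_sum_range_le q_nonneg (fun n => by rw [sum_q]; linarith [c_nonneg n])
  have ht : Tendsto (fun n => ∑ i ∈ Finset.range n, qSeq i) atTop (𝓝 (1/3)) := by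
    simp only [sum_q]
    simpa using (tendsto_const_nhds (x := (1/3:ℝ))).sub tendsto_c_zero
  have := tendsto_nhds_unique hsum.hasSum.tendsto_sum_nat ht
  exact this ▸ hsum.hasSum

lemma hasSum_nq : HasSum (fun n : ℕ => ((n:ℝ)+1) * qSeq n) (2/3) := by
  have hpos : ∀ n : ℕ, 0 ≤ ((n:ℝ)+1) * qSeq n := fun n => by
    have := q_nonneg n
    have h0 : (0:ℝ) ≤ n := Nat.cast_nonneg n
    nlinarith
  have hsum : Summable (fun n : ℕ => ((n:ℝ)+1) * qSeq n) :=
    summable_of_sum_range_le hpos (fun n => by rw [sum_nq]; linarith [R_nonneg n])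
  have ht : Tendsto (fun n => ∑ i ∈ Finset.range n, ((i:ℝ)+1) * qSeq i) atTop (𝓝 (2/3)) := by
    simp only [sum_nq]
    simpa using (tendsto_const_nhds (x := (2/3:ℝ))).sub tendsto_R_zero
  have := tendsto_nhds_unique hsum.hasSum.tendsto_sum_nat ht
  exact this ▸ hsum.hasSum

lemma pStep_nat (n : ℕ) : pStep (n : ℤ) = if n = 1 then 2/3 else 0 := by
  unfold pStep
  by_cases h : n = 1
  · simp [h]
  · rw [if_neg (by exact_mod_cast h), if_neg (by omega), if_neg h]

lemma pStep_negnat (n : ℕ) : pStep (-((n:ℤ)+1)) = qSeq n := by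
  unfold pStep qSeq
  rw [if_neg (by omega), if_pos (by omega)]
  have h1 : (-(-((n:ℤ)+1))).toNat = n + 1 := by omega
  rw [h1, show 2*(n+1)-2 = 2*n from by omega, show n+1-1 = n from by omega]

end PStepAux

/-- `(p_k)_{k ∈ ℤ}` is a centered probability distribution on `ℤ` whose left tail
satisfies `p_{-k} ~ 1/(2√π k^{5/2})` as `k → ∞`. -/
theorem pStep_probability_centered_tail :
    (Summable pStep) ∧ (∑' k : ℤ, pStep k = 1) ∧
    (Summable fun k : ℤ => (k : ℝ) * pStep k) ∧
    (∑' k : ℤ, (k : ℝ) * pStep k = 0) ∧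
    Tendsto (fun k : ℕ => (k : ℝ) ^ ((5 : ℝ) / 2) * pStep (-(k : ℤ)))
      atTop (nhds (1 / (2 * Real.sqrt Real.pi))) := by
  open PStepAux Real Topology in
  -- nat / neg part has-sums for pStep
  have hnat : HasSum (fun n : ℕ => pStep (n:ℤ)) (2/3) := by
    have he : (fun n : ℕ => pStep (n:ℤ)) = fun n => if n = 1 then (2/3:ℝ) else 0 :=
      funext pStep_nat
    rw [he]; exact hasSum_ite_eq 1 (2/3)
  have hneg : HasSum (fun n : ℕ => pStep (-((n:ℤ)+1))) (1/3) := by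
    have he : (fun n : ℕ => pStep (-((n:ℤ)+1))) = qSeq := funext pStep_negnat
    rw [he]; exact hasSum_q
  have hSum : HasSum pStep 1 := by
    have h := hnat.of_nat_of_neg_add_one hneg
    exact (by norm_num : (2/3:ℝ) + 1/3 = 1) ▸ h
  have hnat2 : HasSum (fun n : ℕ => (((n:ℤ)):ℝ) * pStep (n:ℤ)) (2/3) := by
    have he : (fun n : ℕ => (((n:ℤ)):ℝ) * pStep (n:ℤ))
        = fun n => if n = 1 then (2/3:ℝ) else 0 := by
      funext n
      rw [pStep_nat]
      by_cases h : n = 1 <;> simp [h]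
    rw [he]; exact hasSum_ite_eq 1 (2/3)
  have hneg2 : HasSum (fun n : ℕ => (((-((n:ℤ)+1)) : ℤ):ℝ) * pStep (-((n:ℤ)+1))) (-(2/3)) := by
    have he : (fun n : ℕ => (((-((n:ℤ)+1)) : ℤ):ℝ) * pStep (-((n:ℤ)+1)))
        = fun n : ℕ => -((((n:ℝ))+1) * qSeq n) := by
      funext n
      rw [pStep_negnat]
      push_cast
      ring
    rw [he]; exact hasSum_nq.neg
  have hSum2 : HasSum (fun k : ℤ => (k:ℝ) * pStep k) 0 := by
    have h := HasSum.of_nat_of_neg_add_one (f := fun k : ℤ => (k:ℝ) * pStep k) hnat2 hneg2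
    exact (by norm_num : (2/3:ℝ) + -(2/3) = 0) ▸ h
  -- tail asymptotics
  have htail : Tendsto (fun k : ℕ => (k:ℝ)^((5:ℝ)/2) * pStep (-(k:ℤ)))
      atTop (𝓝 (1/(2*Real.sqrt π))) := by
    have hA : Tendsto (fun k : ℕ => Real.sqrt ((k-1:ℕ):ℝ) * bSeq (k-1)) atTop
        (𝓝 (1/Real.sqrt π)) := tendsto_sqrt_b.comp (tendsto_sub_atTop_nat 1)
    have hB : Tendsto (fun k : ℕ => Real.sqrt ((k:ℝ)/((k:ℝ)+(-1)))) atTop (𝓝 1) := by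
      have h := (tendsto_natCast_div_add_atTop (-1:ℝ)).sqrt
      rwa [Real.sqrt_one] at h
    have hC : Tendsto (fun k : ℕ => (k:ℝ)/((k:ℝ)+1)) atTop (𝓝 1) :=
      tendsto_natCast_div_add_atTop (1:ℝ)
    have hlim := hA.mul (hB.mul (hC.mul (tendsto_const_nhds (x := (1/2:ℝ)))))
    rw [show (1/Real.sqrt π) * (1*(1*(1/2))) = 1/(2*Real.sqrt π) by ring] at hlim
    refine hlim.congr' ?_
    filter_upwards [eventually_ge_atTop 2] with k hk
    have hkR : (2:ℝ) ≤ (k:ℝ) := by exact_mod_cast hk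
    have hcast : ((k-1:ℕ):ℝ) = (k:ℝ) - 1 := by
      have : (1:ℕ) ≤ k := by omega
      push_cast [this]
      ring
    have hp : pStep (-(k:ℤ)) = qSeq (k-1) := by
      have h2 : -(k:ℤ) = -(((k-1:ℕ):ℤ)+1) := by omega
      rw [h2, pStep_negnat]
    rw [hp, q_eq_b, hcast]
    set x := (k:ℝ) with hx
    have hx0 : (0:ℝ) < x := by linarith
    have hx1 : (0:ℝ) ≤ x - 1 := by linarith
    have hsq : Real.sqrt (x-1) * Real.sqrt (x/(x+(-1))) = Real.sqrt x := by
      have hx1' : x - 1 ≠ 0 := by linarith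
      rw [show x + (-1) = x - 1 by ring, ← Real.sqrt_mul hx1]
      congr 1
      field_simp
    have hrpow : x^((5:ℝ)/2) = x^2 * Real.sqrt x := by
      rw [Real.sqrt_eq_rpow, ← Real.rpow_natCast x 2, ← Real.rpow_add hx0]
      norm_num
    rw [show Real.sqrt (x-1) * bSeq (k-1) * (Real.sqrt (x/(x+(-1))) * (x/(x+1) * (1/2)))
        = (Real.sqrt (x-1) * Real.sqrt (x/(x+(-1)))) * (bSeq (k-1) * (x/(x+1) * (1/2)))
        from by ring, hsq, hrpow]
    have hxne : x ≠ 0 := ne_of_gt hx0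
    have hx1ne : x + 1 ≠ 0 := by linarith
    field_simp
    ring
  exact ⟨hSum.summable, hSum.tsum_eq, hSum2.summable, hSum2.tsum_eq, htail⟩
end

section
/- The function h is harmonic on the positive integers for the random walk with step distribution (p_k): for every integer k ≥ 1, Σ_{j∈ℤ} p_j · h(k+j) = h(k) (the sum effectively runs over j ≤ 1 since p_j = 0 for j = 0 and j ≥ 2, and h vanishes on nonpositive integers). Equivalently, for every n ≥ 2, Σ_{m≥2} (h(m−1)/h(n−1)) · p_{m−n} = 1, so the numbers p_{n,m} := (h(m−1)/h(n−1)) p_{m−n} define a Markov transition kernel on {2,3,…}. -/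
/-- The harmonic function `h(k) = Γ(k+1/2)/Γ(k)` for `k ≥ 1`, `h(k) = 0` for `k ≤ 0`. -/
noncomputable def hFun : ℤ → ℝ := fun k =>
  if 1 ≤ k then Real.Gamma ((k : ℝ) + 1 / 2) / Real.Gamma (k : ℝ) else 0

open Finset Function Real
open scoped Nat

theorem Ring.choose_succ_right_eq {R : Type*} [Field R] [CharZero R] (a : R) (n : ℕ) :
    choose a (n + 1) = choose a n * (a - n) / (n + 1) := by
  rw [choose_eq_smul, choose_eq_smul, descPochhammer_succ_right, Polynomial.smeval_mul]
  simp only [Polynomial.smeval_sub, Polynomial.smeval_X, Polynomial.smeval_natCast, pow_one,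
    pow_zero, nsmul_eq_mul, mul_one, smul_eq_mul, Nat.factorial_succ]
  push_cast
  field_simp

noncomputable def oneSubPowCoeff {R : Type*} [CommRing R] [BinomialRing R] (r : R) (i : ℕ) : R :=
  (-1) ^ i * Ring.choose r i

section oneSubPowCoeff

variable {R : Type*}

theorem oneSubPowCoeff_zero [CommRing R] [BinomialRing R] (r : R) : oneSubPowCoeff r 0 = 1 := by
  simp [oneSubPowCoeff]

theorem oneSubPowCoeff_succ [Field R] [CharZero R] (r : R) (i : ℕ) :
    oneSubPowCoeff r (i + 1) = oneSubPowCoeff r i * (i - r) / (i + 1) := by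
  rw [oneSubPowCoeff, oneSubPowCoeff, Ring.choose_succ_right_eq]
  ring

theorem sum_antidiagonal_oneSubPowCoeff_mul_neg [CommRing R] [BinomialRing R] (r : R) {n : ℕ}
    (hn : n ≠ 0) :
    ∑ ij ∈ antidiagonal n, oneSubPowCoeff r ij.1 * oneSubPowCoeff (-r) ij.2 = 0 := by
  have hterm : ∀ ij ∈ antidiagonal n, oneSubPowCoeff r ij.1 * oneSubPowCoeff (-r) ij.2 =
      (-1) ^ n * (Ring.choose r ij.1 * Ring.choose (-r) ij.2) := by
    rintro ⟨i, j⟩ hij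
    rw [HasAntidiagonal.mem_antidiagonal] at hij
    subst hij
    simp only [oneSubPowCoeff]
    ring
  rw [sum_congr rfl hterm, ← mul_sum, ← Ring.add_choose_eq _ (Commute.all _ _), add_neg_cancel,
    Ring.choose_zero_pos R (Nat.pos_of_ne_zero hn), mul_zero]

end oneSubPowCoeff

theorem hFun_of_nonpos {k : ℤ} (hk : k ≤ 0) : hFun k = 0 := by
  rw [hFun, if_neg (by omega)]

theorem hFun_pos {k : ℤ} (hk : 1 ≤ k) : 0 < hFun k := by
  have hk' : (1 : ℝ) ≤ k := by exact_mod_cast hk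
  rw [hFun, if_pos hk]
  exact div_pos (Gamma_pos_of_pos (by linarith)) (Gamma_pos_of_pos (by linarith))

theorem hFun_natCast_add_one (b : ℕ) :
    hFun (b + 1) = Gamma (3 / 2) * oneSubPowCoeff (-(3 / 2) : ℝ) b := by
  induction b with
  | zero => norm_num [hFun, oneSubPowCoeff_zero]
  | succ b ih =>
    have hb : (0 : ℝ) < b + 1 := by positivity
    rw [hFun, if_pos (by omega)] at ih ⊢
    push_cast at ih ⊢
    rw [oneSubPowCoeff_succ, ← mul_div_assoc, ← mul_assoc, ← ih,
      show (b : ℝ) + 1 + 1 + 1 / 2 = b + 1 + 1 / 2 + 1 by ring,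
      Gamma_add_one (by positivity), Gamma_add_one hb.ne']
    field_simp
    ring

theorem pStep_of_two_le {j : ℤ} (hj : 2 ≤ j) : pStep j = 0 := by
  rw [pStep, if_neg (by omega), if_neg (by omega)]

theorem pStep_neg_natCast_sub_one (i : ℕ) :
    pStep (-i - 1) = 2 * (2 * i)! / (4 ^ (i + 1) * i ! * (i + 2)!) := by
  have hi : (-(-(i : ℤ) - 1)).toNat = i + 1 := by omega
  rw [pStep, if_neg (by omega), if_pos (by omega), hi,
    show 2 * (i + 1) - 2 = 2 * i by omega, Nat.add_sub_cancel]

theorem pStep_neg_natCast_sub_two (i : ℕ) :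
    pStep (-i - 2) = pStep (-i - 1) * (2 * i + 1) / (2 * (i + 3)) := by
  have h := pStep_neg_natCast_sub_one (i + 1)
  push_cast at h
  rw [show -(i : ℤ) - 2 = -(i + 1) - 1 by ring, h, pStep_neg_natCast_sub_one,
    show 2 * (i + 1) = 2 * i + 1 + 1 by ring, show i + 1 + 2 = i + 2 + 1 by ring]
  simp only [Nat.factorial_succ, pow_succ]
  push_cast
  field_simp
  ring

theorem pStep_neg_natCast_sub_one_eq_oneSubPowCoeff (i : ℕ) :
    pStep (-i - 1) = 2 / 3 * oneSubPowCoeff (3 / 2 : ℝ) (i + 2) := by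
  induction i with
  | zero => norm_num [pStep, oneSubPowCoeff_succ, oneSubPowCoeff_zero]
  | succ i ih =>
    push_cast
    rw [show -((i : ℤ) + 1) - 1 = -i - 2 by ring, pStep_neg_natCast_sub_two, ih,
      oneSubPowCoeff_succ _ (i + 2)]
    push_cast
    field_simp
    ring

theorem pStep_one_sub (i : ℕ) :
    pStep (1 - i) = 2 / 3 * oneSubPowCoeff (3 / 2 : ℝ) i + if i = 1 then 1 else 0 := by
  rcases i with _ | _ | i
  · norm_num [pStep, oneSubPowCoeff_zero]
  · norm_num [pStep, oneSubPowCoeff_succ, oneSubPowCoeff_zero]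
  · rw [if_neg (by omega), add_zero, ← pStep_neg_natCast_sub_one_eq_oneSubPowCoeff]
    congr 1
    push_cast
    ring

theorem sum_range_pStep_mul_hFun (n : ℕ) :
    ∑ i ∈ range (n + 2), pStep (1 - i) * hFun (n + 2 - i) = hFun (n + 1) := by
  set a := oneSubPowCoeff (3 / 2 : ℝ)
  set c := oneSubPowCoeff (-(3 / 2) : ℝ)
  have hterm : ∀ i ∈ range (n + 2), pStep (1 - i) * hFun (n + 2 - i) =
      2 / 3 * Gamma (3 / 2) * (a i * c (n + 1 - i)) +
        if i = 1 then Gamma (3 / 2) * c n else 0 := by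
    intro i hi
    have hcast : ((n + 1 - i : ℕ) : ℤ) = n + 1 - i := by rw [mem_range] at hi; omega
    rw [pStep_one_sub, show (n : ℤ) + 2 - i = (n + 1 - i : ℕ) + 1 by omega,
      hFun_natCast_add_one]
    split_ifs with h
    · subst h
      simp only [Nat.add_sub_cancel]
      ring
    · ring
  calc ∑ i ∈ range (n + 2), pStep (1 - i) * hFun (n + 2 - i)
      = 2 / 3 * Gamma (3 / 2) * ∑ ij ∈ antidiagonal (n + 1), a ij.1 * c ij.2 +
          Gamma (3 / 2) * c n := by
        rw [sum_congr rfl hterm, sum_add_distrib, sum_ite_eq', if_pos (by simp), ← mul_sum,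
          Nat.sum_antidiagonal_eq_sum_range_succ_mk]
    _ = hFun (n + 1) := by
        rw [sum_antidiagonal_oneSubPowCoeff_mul_neg _ n.succ_ne_zero, mul_zero, zero_add,
          hFun_natCast_add_one]

theorem tsum_pStep_mul_hFun {k : ℤ} (hk : 1 ≤ k) :
    ∑' j, pStep j * hFun (k + j) = hFun k := by
  obtain ⟨n, rfl⟩ : ∃ n : ℕ, k = n + 1 := ⟨(k - 1).toNat, by omega⟩
  have hinj : Injective fun i : ℕ ↦ 1 - (i : ℤ) := fun i i' h ↦ by simp only at h; omega
  have hsupp : support (fun j ↦ pStep j * hFun (n + 1 + j)) ⊆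
      Set.range fun i : ℕ ↦ 1 - (i : ℤ) := by
    intro j hj
    by_contra hj'
    have hj2 : 2 ≤ j := by
      by_contra h
      exact hj' ⟨(1 - j).toNat, show 1 - ((1 - j).toNat : ℤ) = j by omega⟩
    exact hj (by simp only [pStep_of_two_le hj2, zero_mul])
  rw [← hinj.tsum_eq hsupp, tsum_eq_sum (s := range (n + 2))]
  · rw [← sum_range_pStep_mul_hFun]
    refine sum_congr rfl fun i _ ↦ ?_
    congr 2
    ring
  · intro i hi
    rw [mem_range] at hi
    rw [hFun_of_nonpos (by omega), mul_zero]

/-- `h` is harmonic on the positive integers for the walk with step distribution `(p_k)`: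
for every `k ≥ 1`, `∑_{j ∈ ℤ} p_j h(k+j) = h(k)`; equivalently, for every `n ≥ 2`,
`∑_{m ≥ 2} (h(m-1)/h(n-1)) p_{m-n} = 1`, so `p_{n,m} := (h(m-1)/h(n-1)) p_{m-n}` is a
Markov transition kernel on `{2,3,…}`. -/
theorem hFun_harmonic :
    (∀ k : ℤ, 1 ≤ k → ∑' j : ℤ, pStep j * hFun (k + j) = hFun k) ∧
    (∀ n : ℤ, 2 ≤ n →
      ∑' m : {m : ℤ // 2 ≤ m}, hFun ((m : ℤ) - 1) / hFun (n - 1) * pStep ((m : ℤ) - n) = 1) := by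
  refine ⟨fun k hk ↦ tsum_pStep_mul_hFun hk, fun n hn ↦ ?_⟩
  have hsupp : support (fun m ↦ hFun (m - 1) / hFun (n - 1) * pStep (m - n)) ⊆
      {m | 2 ≤ m} := by
    refine fun m hm ↦ show 2 ≤ m from not_lt.mp fun h ↦ hm ?_
    show hFun (m - 1) / hFun (n - 1) * pStep (m - n) = 0
    rw [hFun_of_nonpos (by omega), zero_div, zero_mul]
  calc ∑' m : {m : ℤ // 2 ≤ m}, hFun ((m : ℤ) - 1) / hFun (n - 1) * pStep ((m : ℤ) - n)
      = ∑' j, pStep j * hFun (n - 1 + j) / hFun (n - 1) := by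
        refine (tsum_subtype_eq_of_support_subset hsupp).trans ?_
        rw [← (Equiv.addLeft n).tsum_eq]
        refine tsum_congr fun j ↦ ?_
        simp only [Equiv.coe_addLeft, add_sub_cancel_left, add_sub_right_comm]
        ring
    _ = 1 := by
        rw [tsum_div_const, tsum_pStep_mul_hFun (by omega), div_self (hFun_pos (by omega)).ne']
end

section
/- Let γ ∈ (0,1) and let (Y_i)_{i≥1} be a sequence of i.i.d. positive random variables such that there exist C_0 > 0 and x_0 > 0 with P(Y_1 > x) ≤ C_0·x^{−γ} for all x ≥ x_0. Then there exists a constant c < ∞ such that for all n ≥ 1 and all x > 0, P(Y_1 + … + Y_n > x) ≤ c·n·x^{−γ}. -/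
/-!
On the event that no `Y_i` exceeds `x`, the sum equals the sum of the truncations
`min (Y_i) x`; so the tail of the sum is at most `n P(Y > x)` plus, by Markov's inequality,
`n E[min Y x] / x`. Since probabilities are at most `1`, the tail bound holds for all `t > 0`
with constant `K = max C₀ x₀^γ`, and the layer-cake formula gives
`E[min Y x] = ∫₀ˣ P(Y > t) dt ≤ K x^{1-γ} / (1-γ)`, because `γ < 1`.
-/

open MeasureTheory ProbabilityTheory Filter Set
open scoped ENNReal

theorem ENNReal.ofReal_sum_le {ι : Type*} (s : Finset ι) (f : ι → ℝ) :
    ENNReal.ofReal (∑ i ∈ s, f i) ≤ ∑ i ∈ s, ENNReal.ofReal (f i) := by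
  classical
  induction s using Finset.induction_on with
  | empty => simp
  | insert a s ha ih =>
    rw [Finset.sum_insert ha, Finset.sum_insert ha]
    exact ENNReal.ofReal_add_le.trans (by gcongr)

theorem lintegral_Ioc_zero_ofReal_rpow {r : ℝ} (hr : -1 < r) {x : ℝ} (hx : 0 ≤ x) :
    ∫⁻ t in Ioc 0 x, ENNReal.ofReal (t ^ r) = ENNReal.ofReal (x ^ (r + 1) / (r + 1)) := by
  have hint : IntegrableOn (fun t : ℝ => t ^ r) (Ioc 0 x) :=
    (intervalIntegrable_iff_integrableOn_Ioc_of_le hx).mp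
      (intervalIntegral.intervalIntegrable_rpow' hr)
  rw [← ofReal_integral_eq_lintegral_ofReal hint, ← intervalIntegral.integral_of_le hx,
    integral_rpow (Or.inl hr), Real.zero_rpow (by linarith), sub_zero]
  filter_upwards [ae_restrict_mem measurableSet_Ioc] with t ht using Real.rpow_nonneg ht.1.le r

section Tail

variable {Ω : Type*} [MeasurableSpace Ω] {μ : Measure Ω}

theorem measure_lt_le_max_mul_rpow_neg [IsProbabilityMeasure μ] {X : Ω → ℝ} {γ C x₀ : ℝ}
    (hγ : 0 ≤ γ) (htail : ∀ x, x₀ ≤ x → μ.real {ω | x < X ω} ≤ C * x ^ (-γ))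
    {t : ℝ} (ht : 0 < t) :
    μ {ω | t < X ω} ≤ ENNReal.ofReal (max C (x₀ ^ γ) * t ^ (-γ)) := by
  have htγ : 0 ≤ t ^ (-γ) := Real.rpow_nonneg ht.le _
  rcases le_or_gt x₀ t with hxt | htx
  · rw [← ofReal_measureReal]
    exact ENNReal.ofReal_le_ofReal
      ((htail t hxt).trans (mul_le_mul_of_nonneg_right (le_max_left _ _) htγ))
  · have hone : 1 ≤ x₀ ^ γ * t ^ (-γ) := by
      rw [Real.rpow_neg ht.le, ← div_eq_mul_inv, ← Real.div_rpow (ht.trans htx).le ht.le]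
      exact Real.one_le_rpow ((one_le_div ht).mpr htx.le) hγ
    calc μ {ω | t < X ω} ≤ 1 := prob_le_one
      _ ≤ ENNReal.ofReal (max C (x₀ ^ γ) * t ^ (-γ)) := by
        rw [← ENNReal.ofReal_one]
        exact ENNReal.ofReal_le_ofReal
          (hone.trans (mul_le_mul_of_nonneg_right (le_max_right _ _) htγ))

theorem lintegral_ofReal_min_le_of_measure_lt_le {X : Ω → ℝ} (hX : AEMeasurable X μ)
    {γ K x : ℝ} (hγ : γ < 1) (hK : 0 ≤ K) (hx : 0 ≤ x)
    (htail : ∀ t, 0 < t → μ {ω | t < X ω} ≤ ENNReal.ofReal (K * t ^ (-γ))) :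
    ∫⁻ ω, ENNReal.ofReal (min (X ω) x) ∂μ ≤ ENNReal.ofReal (K * (x ^ (1 - γ) / (1 - γ))) := by
  set f : Ω → ℝ := fun ω => max (min (X ω) x) 0
  have hf : ∀ ω, ENNReal.ofReal (min (X ω) x) = ENNReal.ofReal (f ω) := by simp [f]
  calc ∫⁻ ω, ENNReal.ofReal (min (X ω) x) ∂μ = ∫⁻ t in Ioi 0, μ {ω | t < f ω} := by
        simp_rw [hf]
        exact lintegral_eq_lintegral_meas_lt μ (ae_of_all _ fun ω => le_max_right _ _)
          ((hX.min aemeasurable_const).max aemeasurable_const)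
    _ ≤ ∫⁻ t in Ioi 0, (Ioc 0 x).indicator (fun t => ENNReal.ofReal (K * t ^ (-γ))) t := by
        refine setLIntegral_mono' measurableSet_Ioi fun t (ht : 0 < t) => ?_
        by_cases htx : t ≤ x
        · rw [indicator_of_mem (show t ∈ Ioc 0 x from ⟨ht, htx⟩)]
          refine (measure_mono fun ω (hω : t < f ω) => ?_).trans (htail t ht)
          exact (lt_max_iff.mp hω).resolve_right ht.not_gt |>.trans_le (min_le_left _ _)
        · have hempty : {ω | t < f ω} = ∅ :=
            eq_empty_of_forall_notMem fun ω (hω : t < f ω) =>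
              htx (hω.le.trans (max_le (min_le_right _ _) hx))
          rw [hempty, measure_empty]
          exact bot_le
    _ = ENNReal.ofReal K * ∫⁻ t in Ioc 0 x, ENNReal.ofReal (t ^ (-γ)) := by
        rw [setLIntegral_indicator measurableSet_Ioc, Ioc_inter_Ioi, sup_idem]
        simp_rw [ENNReal.ofReal_mul hK]
        exact lintegral_const_mul' _ _ ENNReal.ofReal_ne_top
    _ = ENNReal.ofReal (K * (x ^ (1 - γ) / (1 - γ))) := by
        rw [lintegral_Ioc_zero_ofReal_rpow (by linarith) hx, ← ENNReal.ofReal_mul hK,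
          neg_add_eq_sub]

theorem measure_lt_sum_le {ι : Type*} (s : Finset ι) {X : ι → Ω → ℝ}
    (hX : ∀ i, AEMeasurable (X i) μ) {x : ℝ} (hx : 0 < x) :
    μ {ω | x < ∑ i ∈ s, X i ω} ≤ ∑ i ∈ s, μ {ω | x < X i ω} +
      (∑ i ∈ s, ∫⁻ ω, ENNReal.ofReal (min (X i ω) x) ∂μ) / ENNReal.ofReal x := by
  have hsub : {ω | x < ∑ i ∈ s, X i ω} ⊆ (⋃ i ∈ s, {ω | x < X i ω}) ∪
      {ω | ENNReal.ofReal x ≤ ∑ i ∈ s, ENNReal.ofReal (min (X i ω) x)} := by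
    intro ω (hω : x < ∑ i ∈ s, X i ω)
    by_cases hbig : ∃ i ∈ s, x < X i ω
    · obtain ⟨i, hi, hxi⟩ := hbig
      exact Or.inl (mem_biUnion hi hxi)
    · simp only [not_exists, not_and, not_lt] at hbig
      right
      rw [← Finset.sum_congr rfl fun i hi => min_eq_left (hbig i hi)] at hω
      exact (ENNReal.ofReal_le_ofReal hω.le).trans (ENNReal.ofReal_sum_le _ _)
  have htrunc : ∀ i ∈ s, AEMeasurable (fun ω => ENNReal.ofReal (min (X i ω) x)) μ :=
    fun i _ => ((hX i).min aemeasurable_const).ennreal_ofReal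
  have hmarkov : μ {ω | ENNReal.ofReal x ≤ ∑ i ∈ s, ENNReal.ofReal (min (X i ω) x)} ≤
      (∑ i ∈ s, ∫⁻ ω, ENNReal.ofReal (min (X i ω) x) ∂μ) / ENNReal.ofReal x := by
    rw [← lintegral_finsetSum' s htrunc]
    exact meas_ge_le_lintegral_div (Finset.aemeasurable_fun_sum s htrunc)
      (ENNReal.ofReal_pos.mpr hx).ne' ENNReal.ofReal_ne_top
  exact (measure_mono hsub).trans <| (measure_union_le _ _).trans <|
    add_le_add (measure_biUnion_finset_le _ _) hmarkov

theorem measure_lt_sum_range_le_of_identDistrib {X : ℕ → Ω → ℝ}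
    (hX : ∀ i, IdentDistrib (X i) (X 0) μ μ) {x : ℝ} (hx : 0 < x) (n : ℕ) :
    μ {ω | x < ∑ i ∈ Finset.range n, X i ω} ≤
      n * (μ {ω | x < X 0 ω} + (∫⁻ ω, ENNReal.ofReal (min (X 0 ω) x) ∂μ) / ENNReal.ofReal x) := by
  have htail_eq (i : ℕ) : μ {ω | x < X i ω} = μ {ω | x < X 0 ω} :=
    (hX i).measure_mem_eq measurableSet_Ioi
  have hmean_eq (i : ℕ) : ∫⁻ ω, ENNReal.ofReal (min (X i ω) x) ∂μ =
      ∫⁻ ω, ENNReal.ofReal (min (X 0 ω) x) ∂μ :=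
    ((hX i).comp (measurable_id.min measurable_const).ennreal_ofReal).lintegral_eq
  refine (measure_lt_sum_le _ (fun i => (hX i).aemeasurable_fst) hx).trans_eq ?_
  simp only [htail_eq, hmean_eq, Finset.sum_const, Finset.card_range, nsmul_eq_mul, mul_add,
    mul_div_assoc]

end Tail

theorem sum_iid_positive_tail_bound_general
    {Ω : Type*} [MeasurableSpace Ω] (P : Measure Ω) [IsProbabilityMeasure P]
    (γ : ℝ) (hγ0 : 0 < γ) (hγ1 : γ < 1)
    (Y : ℕ → Ω → ℝ) (hmeas : ∀ i, Measurable (Y i))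
    (hident : ∀ i, P.map (Y i) = P.map (Y 0))
    (C₀ x₀ : ℝ) (hx₀ : 0 < x₀)
    (htail : ∀ x : ℝ, x₀ ≤ x → (P {ω | x < Y 0 ω}).toReal ≤ C₀ * x ^ (-γ)) :
    ∃ c : ℝ, ∀ n : ℕ, 1 ≤ n → ∀ x : ℝ, 0 < x →
      (P {ω | x < ∑ i ∈ Finset.range n, Y i ω}).toReal ≤ c * n * x ^ (-γ) := by
  set K := max C₀ (x₀ ^ γ)
  have hK : 0 ≤ K := (Real.rpow_nonneg hx₀.le γ).trans (le_max_right _ _)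
  have htail_all (t : ℝ) (ht : 0 < t) : P {ω | t < Y 0 ω} ≤ ENNReal.ofReal (K * t ^ (-γ)) :=
    measure_lt_le_max_mul_rpow_neg hγ0.le htail ht
  have hident_distrib (i : ℕ) : IdentDistrib (Y i) (Y 0) P P :=
    ⟨(hmeas i).aemeasurable, (hmeas 0).aemeasurable, hident i⟩
  refine ⟨K * (1 + 1 / (1 - γ)), fun n _ x hx => ENNReal.toReal_le_of_le_ofReal ?_ ?_⟩
  · have : 0 < 1 - γ := by linarith
    positivity
  have hpow : x ^ (1 - γ) = x ^ (-γ) * x := by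
    rw [sub_eq_neg_add, Real.rpow_add_one hx.ne']
  calc P {ω | x < ∑ i ∈ Finset.range n, Y i ω}
      ≤ n * (P {ω | x < Y 0 ω} +
          (∫⁻ ω, ENNReal.ofReal (min (Y 0 ω) x) ∂P) / ENNReal.ofReal x) :=
        measure_lt_sum_range_le_of_identDistrib hident_distrib hx n
    _ ≤ n * (ENNReal.ofReal (K * x ^ (-γ)) +
          ENNReal.ofReal (K * (x ^ (1 - γ) / (1 - γ))) / ENNReal.ofReal x) := by
        gcongr
        · exact htail_all x hx
        · exact lintegral_ofReal_min_le_of_measure_lt_le (hmeas 0).aemeasurable hγ1 hK hx.le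
            htail_all
    _ = ENNReal.ofReal (K * (1 + 1 / (1 - γ)) * n * x ^ (-γ)) := by
        rw [← ENNReal.ofReal_div_of_pos hx, ← ENNReal.ofReal_add (by positivity) (by positivity),
          ← ENNReal.ofReal_natCast, ← ENNReal.ofReal_mul (by positivity), hpow]
        congr 1
        field_simp

/-- If `(Y_i)` are i.i.d. positive random variables with `P(Y_1 > x) ≤ C₀ x^{-γ}` for
`x ≥ x₀`, where `γ ∈ (0,1)`, then there is a constant `c` with
`P(Y_1 + … + Y_n > x) ≤ c n x^{-γ}` for all `n ≥ 1` and all `x > 0`. -/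
theorem sum_iid_positive_tail_bound
    {Ω : Type*} [MeasurableSpace Ω] (P : Measure Ω) [IsProbabilityMeasure P]
    (γ : ℝ) (hγ0 : 0 < γ) (hγ1 : γ < 1)
    (Y : ℕ → Ω → ℝ) (hmeas : ∀ i, Measurable (Y i))
    (hindep : iIndepFun Y P)
    (hident : ∀ i, P.map (Y i) = P.map (Y 0))
    (hpos : ∀ i, ∀ᵐ ω ∂P, 0 < Y i ω)
    (C₀ x₀ : ℝ) (hC₀ : 0 < C₀) (hx₀ : 0 < x₀)
    (htail : ∀ x : ℝ, x₀ ≤ x → (P {ω | x < Y 0 ω}).toReal ≤ C₀ * x ^ (-γ)) :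
    ∃ c : ℝ, ∀ n : ℕ, 1 ≤ n → ∀ x : ℝ, 0 < x →
      (P {ω | x < ∑ i ∈ Finset.range n, Y i ω}).toReal ≤ c * n * x ^ (-γ) :=
  sum_iid_positive_tail_bound_general P γ hγ0 hγ1 Y hmeas hident C₀ x₀ hx₀ htail
end

section
/- Let (S_t) be a centered right-continuous continuous-time random walk with step law ξ (E[ξ_1] = 0, P(ξ_1 ≥ 2) = 0, P(ξ_1 = 1) > 0, ξ_1 not almost surely 0), T = inf{t > 0 : S_t < 0}, H = −S_T the undershoot and L = S_{T−} − S_T the size of the jump at time T. Then for every k ≥ 1: P(H = k) = P(ξ_1 ≤ −k)/P(ξ_1 = 1) and P(L = k) = k·P(ξ_1 = −k)/P(ξ_1 = 1). -/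
/-!
Write `p` for the step law and `green j = ∑ₙ P(Sₗ ≥ 0 for l ≤ n, Sₙ = j)` for the Green function
of the walk killed on entering the negative integers. Splitting according to the time `T - 1` and
the position `i = S_{T-1}` before the first negative step gives `P(H = k) = ∑ᵢ green i · p(-k-i)`
and `P(L = k) = ∑_{i<k} green i · p(-k)`, so both laws follow from `green ≡ 1 / p 1`.

Reversing the first `n` steps turns paths that stay nonnegative and end at `j` into paths that end
at their running maximum `j`. Upward steps have size one, so the walk first exceeds `j` by a `+1`
step from such a maximum, and `v j = P(sup S > j) = green j · p 1`. This `v` satisfies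
`v j = [j = 0] p 1 + ∑ᵢ v i · p(j - i)`, hence `1 - v` is bounded, nondecreasing and harmonic for
the kernel `p(j - i)`. Summing the harmonic equation over `j ≤ J` and using `E ξ⁻ = E ξ⁺ = p 1`
shows that `1 - v` vanishes at `0`; the equation then propagates the zero along the multiples of
any `b` with `p(-b) > 0`, and monotonicity gives `v ≡ 1`.
-/

open MeasureTheory ProbabilityTheory Finset
open scoped ENNReal

namespace SkipFreeWalk

section Harmonic

variable {p : ℤ → ℝ≥0∞}

noncomputable def tail (p : ℤ → ℝ≥0∞) (t : ℤ) : ℝ≥0∞ := ∑' d : ℕ, p (t - d)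

lemma tail_succ (t : ℤ) : tail p (t + 1) = p (t + 1) + tail p t := by
  rw [tail, tsum_eq_zero_add' ENNReal.summable, tail]
  congr 1
  · simp
  · exact tsum_congr fun d => by push_cast; ring_nf

lemma tail_mono : Monotone (tail p) :=
  monotone_int_of_le_succ fun t => (tail_succ t).symm ▸ le_add_self

lemma le_tail (t : ℤ) : p t ≤ tail p t := by
  simpa [tail] using ENNReal.le_tsum (f := fun d : ℕ => p (t - d)) 0

lemma tail_eq_one (h1 : tail p 1 = 1) (hskip : ∀ z, 2 ≤ z → p z = 0) {t : ℤ} (ht : 1 ≤ t) :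
    tail p t = 1 := by
  induction t, ht using Int.leInduction with
  | base => exact h1
  | succ t ht ih => rw [tail_succ, hskip _ (by omega), ih, zero_add]

lemma sum_range_add_tail (s : ℤ) (J : ℕ) :
    ∑ j ∈ range J, p (j - s) + tail p (-1 - s) = tail p (J - 1 - s) := by
  induction J with
  | zero => simp
  | succ J ih =>
    rw [sum_range_succ, add_right_comm, ih, add_comm, Nat.cast_succ]
    simpa [sub_right_comm] using (tail_succ (J - 1 - s)).symm

lemma tail_le_one (h1 : tail p 1 = 1) (hskip : ∀ z, 2 ≤ z → p z = 0) (t : ℤ) : tail p t ≤ 1 :=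
  (tail_mono (le_max_left t 1)).trans (tail_eq_one h1 hskip (le_max_right t 1)).le

/- `hmean` encodes centering: for a law with no mass above `1`, `∑ᵢ tail p (-1 - i)` is the mean
of its negative part and `p 1` that of its positive part. -/
lemma tsum_tail_neg (h1 : tail p 1 = 1) (hmean : ∑' i : ℕ, tail p (-1 - i) = p 1) :
    ∑' d : ℕ, tail p (-d) = 1 := by
  calc ∑' d : ℕ, tail p (-d) = tail p 0 + ∑' i : ℕ, tail p (-1 - i) := by
        rw [tsum_eq_zero_add' ENNReal.summable]
        congr 1
        exact tsum_congr fun d => by push_cast; ring_nf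
    _ = 1 := by simpa [hmean, add_comm] using (tail_succ (p := p) 0).symm.trans h1

lemma exists_neg_ne_zero (hmean : ∑' i : ℕ, tail p (-1 - i) = p 1) (hp1 : p 1 ≠ 0) :
    ∃ b : ℕ, p (-(b + 1)) ≠ 0 := by
  by_contra! hzero
  refine hp1 (hmean ▸ ENNReal.tsum_eq_zero.2 fun i => ENNReal.tsum_eq_zero.2 fun d => ?_)
  convert hzero (i + d) using 2
  push_cast
  ring

variable (h1 : tail p 1 = 1) (hskip : ∀ z, 2 ≤ z → p z = 0)
  (hmean : ∑' i : ℕ, tail p (-1 - i) = p 1)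
include h1 hskip hmean

section
variable {h : ℕ → ℝ≥0∞} (hharm : ∀ j : ℕ, h j = ∑' i : ℕ, h i * p (j - i))
include hharm

lemma add_sum_mul_tail_le (J : ℕ) :
    h J + ∑ i ∈ range J, h i * tail p (-1 - i) ≤ ⨆ j, h j := by
  set M := ⨆ j, h j
  rcases eq_or_ne M ⊤ with hM | hM
  · exact hM ▸ le_top
  /- Sum the harmonic equation over `j ≤ J`: for `i < J` the window mass `C i` and the tail
  `tail p (-1 - i)` add up to `1`, and the terms with `i ≥ J` are at most
  `M * ∑ d, tail p (-d) = M`. -/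
  set C : ℕ → ℝ≥0∞ := fun i => ∑ j ∈ range (J + 1), p (j - i)
  have hC (i : ℕ) : C i + tail p (-1 - i) = tail p (J - i) := by
    simpa using sum_range_add_tail (p := p) i (J + 1)
  have hsum : ∑ j ∈ range (J + 1), h j =
      ∑ i ∈ range J, h i * C i + ∑' d, h (d + J) * C (d + J) := by
    rw [Summable.sum_add_tsum_nat_add' ENNReal.summable, sum_congr rfl fun j _ => hharm j,
      ← Summable.tsum_finsetSum fun _ _ => ENNReal.summable]
    simp_rw [C, mul_sum]
  have hrest : ∑' d, h (d + J) * C (d + J) ≤ M := calc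
    _ ≤ ∑' d : ℕ, M * tail p (-d) := by
      refine ENNReal.tsum_le_tsum fun d => mul_le_mul' (le_iSup h _) ?_
      refine le_self_add.trans_eq ((hC _).trans ?_)
      congr 1
      push_cast
      ring
    _ = M := by rw [ENNReal.tsum_mul_left, tsum_tail_neg h1 hmean, mul_one]
  have hlow : ∀ i ∈ range J, h i * C i + h i * tail p (-1 - i) = h i := fun i hi => by
    rw [← mul_add, hC, tail_eq_one h1 hskip (by simp only [mem_range] at hi; omega), mul_one]
  have hfin : ∑ i ∈ range J, h i ≠ ⊤ :=
    ENNReal.sum_ne_top.2 fun i _ => ne_top_of_le_ne_top hM (le_iSup h i)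
  refine ENNReal.le_of_add_le_add_left hfin ?_
  calc ∑ i ∈ range J, h i + (h J + ∑ i ∈ range J, h i * tail p (-1 - i))
      = ∑ i ∈ range J, h i * C i + ∑' d, h (d + J) * C (d + J) +
          ∑ i ∈ range J, h i * tail p (-1 - i) := by
        rw [← hsum, sum_range_succ, add_assoc]
    _ = ∑ i ∈ range J, h i + ∑' d, h (d + J) * C (d + J) := by
        rw [add_right_comm, ← sum_add_distrib, sum_congr rfl hlow]
    _ ≤ ∑ i ∈ range J, h i + M := by gcongr

theorem harmonic_eq_zero (hp1 : p 1 ≠ 0) (hmono : Monotone h) (hbdd : ⨆ j, h j ≠ ⊤) :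
    h = 0 := by
  obtain ⟨b, hb⟩ := exists_neg_ne_zero hmean hp1
  have h0 : h 0 = 0 := by
    have hle : (⨆ j, h j) + h 0 * tail p (-1) ≤ (⨆ j, h j) + 0 := by
      rw [add_zero, ← hmono.iSup_nat_add 1, ENNReal.iSup_add]
      refine iSup_le fun J => le_trans ?_ ((add_sum_mul_tail_le h1 hskip hmean hharm (J + 1)).trans
        (hmono.iSup_nat_add 1).ge)
      gcongr
      simpa using single_le_sum (f := fun i : ℕ => h i * tail p (-1 - i))
        (fun _ _ => zero_le) (mem_range.2 J.succ_pos)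
    have hq : tail p (-1) ≠ 0 :=
      (hb.bot_lt.trans_le ((le_tail _).trans (tail_mono (by omega)))).ne'
    simpa [hq] using (ENNReal.add_le_add_iff_left hbdd).1 hle
  have hstep (j : ℕ) (hj : h j = 0) : h (j + (b + 1)) = 0 := by
    have := ENNReal.le_tsum (f := fun i : ℕ => h i * p (j - i)) (j + (b + 1))
    rw [← hharm, hj, nonpos_iff_eq_zero, mul_eq_zero] at this
    refine this.resolve_right ?_
    convert hb using 3
    push_cast
    ring
  have hmul (n : ℕ) : h (n * (b + 1)) = 0 := by
    induction n with
    | zero => simpa using h0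
    | succ n ih => simpa [add_mul] using hstep _ ih
  funext j
  exact le_antisymm ((hmono (Nat.le_mul_of_pos_right j b.succ_pos)).trans (hmul j).le) zero_le

end

theorem eq_one_of_renewal (hp1 : p 1 ≠ 0) {v : ℕ → ℝ≥0∞} (hanti : Antitone v)
    (hle : ∀ j, v j ≤ 1)
    (hren : ∀ j : ℕ, v j = (if j = 0 then p 1 else 0) + ∑' i : ℕ, v i * p (j - i)) (j : ℕ) :
    v j = 1 := by
  have hp_ne_top (z : ℤ) : p z ≠ ⊤ :=
    ne_top_of_le_ne_top ENNReal.one_ne_top ((le_tail z).trans (tail_le_one h1 hskip z))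
  have hconst (j : ℕ) : (if j = 0 then p 1 else 0) + tail p j = 1 := by
    rcases Nat.eq_zero_or_pos j with rfl | hj
    · simpa [add_comm] using (tail_succ (p := p) 0).symm.trans h1
    · rw [if_neg hj.ne', zero_add, tail_eq_one h1 hskip (by omega)]
  have hharm (j : ℕ) : 1 - v j = ∑' i : ℕ, (1 - v i) * p (j - i) := calc
    1 - v j = ((if j = 0 then p 1 else 0) + ∑' i : ℕ, p (j - i)) -
        ((if j = 0 then p 1 else 0) + ∑' i : ℕ, v i * p (j - i)) := by
      rw [← hren, ← tail, hconst]
    _ = ∑' i : ℕ, p (j - i) - ∑' i : ℕ, v i * p (j - i) :=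
      ENNReal.add_sub_add_eq_sub_left (by split_ifs <;> simp [hp_ne_top])
    _ = ∑' i : ℕ, (1 - v i) * p (j - i) := by
      rw [← ENNReal.tsum_sub]
      · exact tsum_congr fun i => by rw [ENNReal.sub_mul fun _ _ => hp_ne_top _, one_mul]
      · refine ne_top_of_le_ne_top ENNReal.one_ne_top ?_
        exact (ENNReal.tsum_le_tsum fun i => mul_le_of_le_one_left' (hle i)).trans
          (tail_le_one h1 hskip j)
      · exact fun i => mul_le_of_le_one_left' (hle i)
  have hzero := harmonic_eq_zero h1 hskip hmean hharm hp1
    (fun a b hab => tsub_le_tsub_left (hanti hab) 1)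
    (ne_top_of_le_ne_top ENNReal.one_ne_top (iSup_le fun _ => tsub_le_self))
  exact le_antisymm (hle j) (tsub_eq_zero_iff_le.1 (congrFun hzero j))

end Harmonic

section Walk

variable {Ω : Type*} {ξ : ℕ → Ω → ℤ} {ω : Ω}

def walk (ξ : ℕ → Ω → ℤ) (n : ℕ) (ω : Ω) : ℤ := ∑ i ∈ range n, ξ i ω

@[simp] lemma walk_zero : walk ξ 0 ω = 0 := sum_range_zero _

lemma walk_succ (n : ℕ) : walk ξ (n + 1) ω = walk ξ n ω + ξ n ω := sum_range_succ _ _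

noncomputable def firstNeg (ξ : ℕ → Ω → ℤ) (ω : Ω) : ℕ := sInf {n | walk ξ n ω < 0}

lemma firstNeg_eq_succ_iff {m : ℕ} :
    firstNeg ξ ω = m + 1 ↔ (∀ l ≤ m, 0 ≤ walk ξ l ω) ∧ walk ξ (m + 1) ω < 0 := by
  constructor
  · intro hm
    have hne : {n | walk ξ n ω < 0}.Nonempty := by
      by_contra hemp
      simp [firstNeg, Set.not_nonempty_iff_eq_empty.1 hemp] at hm
    have hneg : walk ξ (m + 1) ω < 0 := hm ▸ Nat.sInf_mem hne
    refine ⟨fun l hl => not_lt.1 fun hl' => ?_, hneg⟩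
    have : firstNeg ξ ω ≤ l := Nat.sInf_le hl'
    omega
  · rintro ⟨hnn, hneg⟩
    refine le_antisymm (Nat.sInf_le hneg) (le_csInf ⟨_, hneg⟩ fun l hl => ?_)
    by_contra! hlt
    exact (hnn l (by omega)).not_gt hl

def aliveAt (ξ : ℕ → Ω → ℤ) (n : ℕ) (j : ℤ) : Set Ω :=
  {ω | (∀ l ≤ n, 0 ≤ walk ξ l ω) ∧ walk ξ n ω = j}

def recordAt (ξ : ℕ → Ω → ℤ) (n : ℕ) (j : ℤ) : Set Ω :=
  {ω | (∀ l ≤ n, walk ξ l ω ≤ j) ∧ walk ξ n ω = j}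

def exceeds (ξ : ℕ → Ω → ℤ) (j : ℤ) : Set Ω := {ω | ∃ n, j < walk ξ n ω}

def exitAt (ξ : ℕ → Ω → ℤ) (m : ℕ) (i c : ℤ) : Set Ω :=
  {ω | firstNeg ξ ω = m + 1 ∧ walk ξ m ω = i ∧ ξ m ω = c}

lemma aliveAt_succ {n j : ℕ} :
    aliveAt ξ (n + 1) j = ⋃ i : ℕ, aliveAt ξ n i ∩ ξ n ⁻¹' {(j - i : ℤ)} := by
  ext ω
  simp only [aliveAt, Set.mem_iUnion, Set.mem_inter_iff, Set.mem_ofPred_eq, Set.mem_preimage,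
    Set.mem_singleton_iff, walk_succ]
  constructor
  · rintro ⟨hnn, hj⟩
    exact ⟨(walk ξ n ω).toNat, ⟨fun l hl => hnn l (by omega), by grind⟩, by grind⟩
  · rintro ⟨i, ⟨hnn, hi⟩, hc⟩
    refine ⟨fun l hl => ?_, by omega⟩
    rcases Nat.lt_or_ge l (n + 1) with hl' | hl'
    · exact hnn l (by omega)
    · rw [show l = n + 1 by omega, walk_succ]; omega

lemma exitAt_eq {m : ℕ} {i c : ℤ} (h : i + c < 0) :
    exitAt ξ m i c = aliveAt ξ m i ∩ ξ m ⁻¹' {c} := by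
  ext ω
  simp only [exitAt, aliveAt, firstNeg_eq_succ_iff, walk_succ, Set.mem_inter_iff,
    Set.mem_ofPred_eq, Set.mem_preimage, Set.mem_singleton_iff]
  grind

lemma exitAt_eq_empty {m : ℕ} {i c : ℤ} (h : 0 ≤ i + c) : exitAt ξ m i c = ∅ := by
  ext ω
  simp only [exitAt, firstNeg_eq_succ_iff, walk_succ, Set.mem_ofPred_eq, Set.mem_empty_iff_false,
    iff_false]
  omega

lemma setOf_undershoot_eq {k : ℤ} (hk : 1 ≤ k) :
    {ω | -walk ξ (firstNeg ξ ω) ω = k} = ⋃ x : ℕ × ℕ, exitAt ξ x.1 x.2 (-k - x.2) := by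
  ext ω
  simp only [Set.mem_ofPred_eq, Set.mem_iUnion, exitAt, Prod.exists]
  constructor
  · intro hk'
    obtain ⟨m, hm⟩ := Nat.exists_eq_succ_of_ne_zero (n := firstNeg ξ ω) fun h0 => by
      simp only [h0, walk_zero, neg_zero] at hk'
      omega
    have hnn := (firstNeg_eq_succ_iff.1 hm).1 m le_rfl
    rw [hm, walk_succ] at hk'
    exact ⟨m, (walk ξ m ω).toNat, hm, by omega, by omega⟩
  · rintro ⟨m, i, hm, hi, hc⟩
    rw [hm, walk_succ]
    omega

lemma setOf_jump_eq {k : ℤ} (hk : 1 ≤ k) :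
    {ω | walk ξ (firstNeg ξ ω - 1) ω - walk ξ (firstNeg ξ ω) ω = k} =
      ⋃ x : ℕ × ℕ, exitAt ξ x.1 x.2 (-k) := by
  ext ω
  simp only [Set.mem_ofPred_eq, Set.mem_iUnion, exitAt, Prod.exists]
  constructor
  · intro hk'
    obtain ⟨m, hm⟩ := Nat.exists_eq_succ_of_ne_zero (n := firstNeg ξ ω) fun h0 => by
      simp only [h0, zero_tsub, walk_zero, sub_self] at hk'
      omega
    have hnn := (firstNeg_eq_succ_iff.1 hm).1 m le_rfl
    rw [hm, walk_succ, Nat.succ_sub_one] at hk'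
    exact ⟨m, (walk ξ m ω).toNat, hm, by omega, by omega⟩
  · rintro ⟨m, i, hm, hi, hc⟩
    rw [hm, walk_succ, Nat.add_sub_cancel]
    omega

lemma mem_exceeds_iff (hstep : ∀ i, ξ i ω ≤ 1) {j : ℤ} (hj : 0 ≤ j) :
    ω ∈ exceeds ξ j ↔ ∃ n, ω ∈ recordAt ξ n j ∧ ξ n ω = 1 := by
  constructor
  · intro hex
    change ∃ n, j < walk ξ n ω at hex
    classical
    obtain ⟨m, hm⟩ := Nat.exists_eq_succ_of_ne_zero (n := Nat.find hex) fun h0 => by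
      have := Nat.find_spec hex
      rw [h0, walk_zero] at this
      omega
    have hfirst := Nat.find_spec hex
    have hmin (l) (hl : l ≤ m) : walk ξ l ω ≤ j := not_lt.1 (Nat.find_min hex (by omega))
    rw [hm, walk_succ] at hfirst
    have := hmin m le_rfl
    have := hstep m
    exact ⟨m, ⟨hmin, by omega⟩, by omega⟩
  · rintro ⟨n, ⟨-, hn⟩, hstep⟩
    exact ⟨n + 1, by rw [walk_succ]; omega⟩

def reflect (n i : ℕ) : ℕ := if i < n then n - 1 - i else i

lemma reflect_injective (n : ℕ) : Function.Injective (reflect n) := by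
  intro a b h
  simp only [reflect] at h
  split_ifs at h <;> omega

lemma walk_reflect {n l : ℕ} (hl : l ≤ n) :
    walk (fun i => ξ (reflect n i)) l ω = walk ξ n ω - walk ξ (n - l) ω := by
  rcases Nat.eq_zero_or_pos n with rfl | hn
  · obtain rfl : l = 0 := by omega
    simp
  have hrefl := sum_Ico_reflect (fun i => ξ i ω) 0 (show l ≤ n - 1 + 1 by omega)
  rw [Nat.sub_add_cancel hn, Nat.sub_zero] at hrefl
  rw [walk, walk, walk, ← sum_Ico_eq_sub _ (Nat.sub_le n l), ← hrefl, range_eq_Ico]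
  exact sum_congr rfl fun i hi => by
    rw [mem_Ico] at hi
    simp [reflect, show i < n by omega, Nat.sub_sub]

lemma recordAt_eq_aliveAt_reflect (n : ℕ) (j : ℤ) :
    recordAt ξ n j = aliveAt (fun i => ξ (reflect n i)) n j := by
  ext ω
  simp only [recordAt, aliveAt, Set.mem_ofPred_eq, walk_reflect le_rfl, Nat.sub_self, walk_zero,
    sub_zero]
  constructor
  · rintro ⟨hle, rfl⟩
    exact ⟨fun l hl => by rw [walk_reflect hl]; linarith [hle (n - l) (Nat.sub_le n l)], rfl⟩
  · rintro ⟨hnn, rfl⟩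
    refine ⟨fun l hl => ?_, rfl⟩
    have := hnn (n - l) (Nat.sub_le n l)
    rw [walk_reflect (Nat.sub_le n l), Nat.sub_sub_self hl] at this
    linarith

end Walk

section Centered

variable {Ω : Type*} [MeasurableSpace Ω] {P : Measure Ω}

lemma ofReal_neg_intCast_eq_tsum (z : ℤ) :
    ENNReal.ofReal (-z) = ∑' i : ℕ, (Set.Iic (-1 - i : ℤ)).indicator 1 z := by
  have hind (i : ℕ) : (Set.Iic (-1 - i : ℤ)).indicator (1 : ℤ → ℝ≥0∞) z =
      if i ∈ range (-z).toNat then 1 else 0 := by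
    simp only [Set.indicator_apply, Set.mem_Iic, mem_range, Pi.one_apply]
    congr 1
    exact propext (by omega)
  rw [tsum_congr hind, tsum_eq_sum (s := range (-z).toNat) fun i hi => if_neg hi]
  simp only [sum_ite_mem, inter_self, sum_const, card_range, nsmul_eq_mul, mul_one]
  rcases le_or_gt z 0 with hz | hz
  · rw [← ENNReal.ofReal_natCast]
    congr 1
    exact_mod_cast (Int.toNat_of_nonneg (by omega : 0 ≤ -z)).symm
  · rw [ENNReal.ofReal_of_nonpos (by simpa using hz.le), Int.toNat_of_nonpos (by omega),
      Nat.cast_zero]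

lemma tsum_measure_preimage_Iic_eq_of_integral_eq_zero {X : Ω → ℤ} (hX : Measurable X)
    (hint : Integrable (fun ω => (X ω : ℝ)) P) (hmean : ∫ ω, (X ω : ℝ) ∂P = 0)
    (hle : ∀ᵐ ω ∂P, X ω ≤ 1) :
    ∑' i : ℕ, P (X ⁻¹' Set.Iic (-1 - i)) = P (X ⁻¹' {1}) := by
  have hpos : ∫⁻ ω, ENNReal.ofReal (X ω) ∂P = P (X ⁻¹' {1}) := by
    rw [← lintegral_indicator_one (hX .of_discrete)]
    refine lintegral_congr_ae (hle.mono fun ω hω => ?_)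
    rcases eq_or_lt_of_le hω with h | h
    · simp [h]
    · have : (X ω : ℝ) ≤ 0 := by exact_mod_cast (by omega : X ω ≤ 0)
      simp [ENNReal.ofReal_of_nonpos this, h.ne]
  have hneg : ∫⁻ ω, ENNReal.ofReal (-X ω) ∂P = ∑' i : ℕ, P (X ⁻¹' Set.Iic (-1 - i)) := by
    rw [lintegral_congr (g := fun ω => ∑' i : ℕ, (X ⁻¹' Set.Iic (-1 - i : ℤ)).indicator 1 ω)
        fun ω => ofReal_neg_intCast_eq_tsum (X ω),
      lintegral_tsum fun i => (measurable_one.indicator (hX .of_discrete)).aemeasurable]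
    exact tsum_congr fun i => lintegral_indicator_one (hX .of_discrete)
  have hsplit := integral_eq_lintegral_pos_part_sub_lintegral_neg_part hint
  rw [hmean] at hsplit
  rw [← hneg, ← hpos]
  have hfin : ∫⁻ ω, ENNReal.ofReal (-X ω) ∂P ≠ ⊤ := hint.neg.lintegral_lt_top.ne
  exact (ENNReal.toReal_eq_toReal_iff' hfin hint.lintegral_lt_top.ne).1 (by linarith)

end Centered

section Probability

variable {Ω : Type*} {ξ : ℕ → Ω → ℤ}

abbrev past (ξ : ℕ → Ω → ℤ) (n : ℕ) : MeasurableSpace Ω :=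
  ⨆ i ∈ Set.Iio n, MeasurableSpace.comap (ξ i) inferInstance

lemma measurable_walk_past {n l : ℕ} (hl : l ≤ n) : Measurable[past ξ n] (walk ξ l) :=
  Finset.measurable_sum _ fun i hi => (comap_measurable (ξ i)).mono
    (le_iSup₂ (f := fun i (_ : i ∈ Set.Iio n) => MeasurableSpace.comap (ξ i) inferInstance) i
      (by simp only [mem_range] at hi; exact Set.mem_Iio.2 (by omega))) le_rfl

lemma measurableSet_past_of_walk (n : ℕ) (Q : ℕ → ℤ → Prop) (j : ℤ) :
    MeasurableSet[past ξ n] {ω | (∀ l ≤ n, Q l (walk ξ l ω)) ∧ walk ξ n ω = j} := by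
  simp only [Set.ofPred_and, Set.ofPred_forall]
  exact .inter (.iInter fun l => .iInter fun hl => measurable_walk_past hl .of_discrete)
    (measurable_walk_past (ξ := ξ) (n := n) le_rfl (.of_discrete : MeasurableSet {j}))

lemma measurableSet_aliveAt_past (n : ℕ) (j : ℤ) : MeasurableSet[past ξ n] (aliveAt ξ n j) :=
  measurableSet_past_of_walk n (fun _ x => 0 ≤ x) j

lemma measurableSet_recordAt_past (n : ℕ) (j : ℤ) : MeasurableSet[past ξ n] (recordAt ξ n j) :=
  measurableSet_past_of_walk n (fun _ x => x ≤ j) j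

variable [MeasurableSpace Ω] {P : Measure Ω}

noncomputable def stepMass (P : Measure Ω) (ξ : ℕ → Ω → ℤ) (c : ℤ) : ℝ≥0∞ := P (ξ 0 ⁻¹' {c})

noncomputable def green (P : Measure Ω) (ξ : ℕ → Ω → ℤ) (j : ℤ) : ℝ≥0∞ :=
  ∑' n, P (aliveAt ξ n j)

lemma past_le (hmeas : ∀ i, Measurable (ξ i)) (n : ℕ) : past ξ n ≤ ‹MeasurableSpace Ω› :=
  iSup₂_le fun i _ => (hmeas i).comap_le

lemma measurableSet_aliveAt (hmeas : ∀ i, Measurable (ξ i)) (n : ℕ) (j : ℤ) :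
    MeasurableSet (aliveAt ξ n j) :=
  past_le hmeas n _ (measurableSet_aliveAt_past n j)

lemma measurableSet_exitAt (hmeas : ∀ i, Measurable (ξ i)) (m : ℕ) (i c : ℤ) :
    MeasurableSet (exitAt ξ m i c) := by
  rcases lt_or_ge (i + c) 0 with h | h
  · rw [exitAt_eq h]
    exact (measurableSet_aliveAt hmeas m i).inter (hmeas m .of_discrete)
  · rw [exitAt_eq_empty h]
    exact .empty

lemma measure_aliveAt_zero [IsProbabilityMeasure P] (j : ℤ) :
    P (aliveAt ξ 0 j) = if j = 0 then 1 else 0 := by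
  by_cases hj : j = 0
  · simp [aliveAt, hj]
  · simp [aliveAt, hj, Ne.symm hj]

lemma tail_stepMass (h0 : Measurable (ξ 0)) (t : ℤ) :
    tail (stepMass P ξ) t = P (ξ 0 ⁻¹' Set.Iic t) := by
  have hunion : ξ 0 ⁻¹' Set.Iic t = ⋃ d : ℕ, ξ 0 ⁻¹' {t - d} := by
    ext ω
    simp only [Set.mem_preimage, Set.mem_Iic, Set.mem_iUnion, Set.mem_singleton_iff]
    exact ⟨fun h => ⟨(t - ξ 0 ω).toNat, by omega⟩, fun ⟨d, hd⟩ => by omega⟩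
  rw [hunion, measure_iUnion (fun d d' hne => Disjoint.preimage _ (by simpa using hne))
    fun d => h0 .of_discrete]
  rfl

section IID

variable (hmeas : ∀ i, Measurable (ξ i)) (hident : ∀ i, P.map (ξ i) = P.map (ξ 0))
include hmeas hident

lemma measure_preimage_step (n : ℕ) (A : Set ℤ) : P (ξ n ⁻¹' A) = P (ξ 0 ⁻¹' A) := by
  rw [← Measure.map_apply (hmeas n) .of_discrete, hident, Measure.map_apply (hmeas 0) .of_discrete]

lemma ae_step_le_one (hskip : P {ω | 2 ≤ ξ 0 ω} = 0) (i : ℕ) : ∀ᵐ ω ∂P, ξ i ω ≤ 1 := by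
  have : P (ξ i ⁻¹' Set.Ici 2) = 0 := (measure_preimage_step hmeas hident i _).trans hskip
  filter_upwards [measure_eq_zero_iff_ae_notMem.1 this] with ω hω
  simp only [Set.mem_preimage, Set.mem_Ici, not_le] at hω
  omega

variable (hindep : iIndepFun ξ P)
include hindep

lemma measure_inter_step {n : ℕ} {E : Set Ω} (hE : MeasurableSet[past ξ n] E) (c : ℤ) :
    P (E ∩ ξ n ⁻¹' {c}) = P E * stepMass P ξ c := by
  have hind := indep_iSup_of_disjoint (fun i => (hmeas i).comap_le) hindep.iIndep
    (S := Set.Iio n) (T := {n}) (by simp)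
  rw [Indep_iff] at hind
  rw [hind E _ hE (by rw [_root_.iSup_singleton]; exact ⟨{c}, .of_discrete, rfl⟩), stepMass,
    measure_preimage_step hmeas hident]

lemma map_reindex {σ : ℕ → ℕ} (hσ : σ.Injective) :
    P.map (fun ω i => ξ (σ i) ω) = P.map (fun ω i => ξ i ω) := by
  rw [(hindep.precomp hσ).map_fun_eq_infinitePi_map (fun i => hmeas _),
    hindep.map_fun_eq_infinitePi_map hmeas]
  simp_rw [hident]

lemma measure_aliveAt_reindex {σ : ℕ → ℕ} (hσ : σ.Injective) (n : ℕ) (j : ℤ) :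
    P (aliveAt (fun i => ξ (σ i)) n j) = P (aliveAt ξ n j) := by
  have hA := measurableSet_aliveAt (fun i => measurable_pi_apply i) n j
  change P ((fun ω i => ξ (σ i) ω) ⁻¹' aliveAt (fun i (x : ℕ → ℤ) => x i) n j) =
    P ((fun ω i => ξ i ω) ⁻¹' aliveAt (fun i (x : ℕ → ℤ) => x i) n j)
  rw [← Measure.map_apply (measurable_pi_lambda _ fun i => hmeas _) hA,
    map_reindex hmeas hident hindep hσ, Measure.map_apply (measurable_pi_lambda _ hmeas) hA]

lemma measure_recordAt (n : ℕ) (j : ℤ) : P (recordAt ξ n j) = P (aliveAt ξ n j) := by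
  rw [recordAt_eq_aliveAt_reflect, measure_aliveAt_reindex hmeas hident hindep
    (reflect_injective n)]

lemma measure_exceeds (hskip : P {ω | 2 ≤ ξ 0 ω} = 0) {j : ℤ} (hj : 0 ≤ j) :
    P (exceeds ξ j) = green P ξ j * stepMass P ξ 1 := by
  have hae : ∀ᵐ ω ∂P, ∀ i, ξ i ω ≤ 1 := ae_all_iff.2 (ae_step_le_one hmeas hident hskip)
  have hdisj : Pairwise (Function.onFun Disjoint fun n => recordAt ξ n j ∩ ξ n ⁻¹' {1}) :=
    (pairwise_disjoint_on _).2 fun m n hmn => Set.disjoint_left.2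
      fun ω ⟨⟨_, hm⟩, hstep⟩ ⟨⟨hle, _⟩, _⟩ => by
        have := hle (m + 1) hmn
        rw [walk_succ] at this
        simp only [Set.mem_preimage, Set.mem_singleton_iff] at hstep
        omega
  calc P (exceeds ξ j) = P (⋃ n, recordAt ξ n j ∩ ξ n ⁻¹' {1}) :=
        measure_congr (Filter.eventuallyEq_set.2 (hae.mono fun ω hω => by
          simpa using mem_exceeds_iff hω hj))
    _ = ∑' n, P (aliveAt ξ n j) * stepMass P ξ 1 := by
        rw [measure_iUnion hdisj fun n =>
          (past_le hmeas n _ (measurableSet_recordAt_past n j)).inter (hmeas n .of_discrete)]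
        exact tsum_congr fun n => by
          rw [measure_inter_step hmeas hident hindep (measurableSet_recordAt_past n j),
            measure_recordAt hmeas hident hindep]
    _ = green P ξ j * stepMass P ξ 1 := ENNReal.tsum_mul_right

lemma green_renewal [IsProbabilityMeasure P] (j : ℕ) :
    green P ξ j = (if j = 0 then 1 else 0) + ∑' i : ℕ, green P ξ i * stepMass P ξ (j - i) := by
  rw [green, tsum_eq_zero_add' ENNReal.summable, measure_aliveAt_zero]
  simp only [Nat.cast_eq_zero, green, ← ENNReal.tsum_mul_right]
  congr 1
  rw [ENNReal.tsum_comm]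
  refine tsum_congr fun n => ?_
  have hdisj : Pairwise (Function.onFun Disjoint
      fun i : ℕ => aliveAt ξ n i ∩ ξ n ⁻¹' {(j - i : ℤ)}) := fun i i' hii' =>
    Set.disjoint_left.2 fun ω ⟨⟨_, hi⟩, _⟩ ⟨⟨_, hi'⟩, _⟩ => hii' (by omega)
  rw [aliveAt_succ, measure_iUnion hdisj fun i =>
    (measurableSet_aliveAt hmeas n i).inter (hmeas n .of_discrete)]
  exact tsum_congr fun i =>
    measure_inter_step hmeas hident hindep (measurableSet_aliveAt_past n i) _

theorem green_eq_inv [IsProbabilityMeasure P]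
    (hint : Integrable (fun ω => (ξ 0 ω : ℝ)) P) (hcentered : ∫ ω, (ξ 0 ω : ℝ) ∂P = 0)
    (hskip : P {ω | 2 ≤ ξ 0 ω} = 0) (hp1 : stepMass P ξ 1 ≠ 0) (j : ℕ) :
    green P ξ j = (stepMass P ξ 1)⁻¹ := by
  have htail1 : tail (stepMass P ξ) 1 = 1 := by
    rw [tail_stepMass (hmeas 0), ← prob_compl_eq_zero_iff (hmeas 0 .of_discrete)]
    refine measure_mono_null (fun ω hω => ?_) hskip
    simp only [Set.mem_compl_iff, Set.mem_preimage, Set.mem_Iic, not_le, Set.mem_ofPred_eq] at hω ⊢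
    omega
  have hskip' (z : ℤ) (hz : 2 ≤ z) : stepMass P ξ z = 0 :=
    measure_mono_null (fun ω hω => by
      simp only [Set.mem_preimage, Set.mem_singleton_iff, Set.mem_ofPred_eq] at hω ⊢
      omega) hskip
  have hmean : ∑' i : ℕ, tail (stepMass P ξ) (-1 - i) = stepMass P ξ 1 := by
    simp_rw [tail_stepMass (hmeas 0)]
    exact tsum_measure_preimage_Iic_eq_of_integral_eq_zero (hmeas 0) hint hcentered
      (ae_step_le_one hmeas hident hskip 0)
  have hexc (j : ℕ) := measure_exceeds hmeas hident hindep hskip (Int.natCast_nonneg j)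
  have hv := eq_one_of_renewal htail1 hskip' hmean hp1 (v := fun j : ℕ => P (exceeds ξ j))
    (fun a b hab => measure_mono fun ω ⟨n, hn⟩ => ⟨n, lt_of_le_of_lt (by exact_mod_cast hab) hn⟩)
    (fun j => prob_le_one)
    (fun j => by
      simp only [hexc, green_renewal hmeas hident hindep j, add_mul, ite_mul, one_mul, zero_mul,
        ← ENNReal.tsum_mul_right, mul_right_comm])
  exact ENNReal.eq_inv_of_mul_eq_one_left ((hexc j).symm.trans (hv j))

lemma measure_exitAt (m : ℕ) (i c : ℤ) :
    P (exitAt ξ m i c) = if i + c < 0 then P (aliveAt ξ m i) * stepMass P ξ c else 0 := by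
  split_ifs with h
  · rw [exitAt_eq h, measure_inter_step hmeas hident hindep (measurableSet_aliveAt_past m i)]
  · rw [exitAt_eq_empty (not_lt.1 h), measure_empty]

lemma measure_iUnion_exitAt (hgreen : ∀ i : ℕ, green P ξ i = (stepMass P ξ 1)⁻¹) (c : ℕ → ℤ) :
    P (⋃ x : ℕ × ℕ, exitAt ξ x.1 x.2 (c x.2)) =
      (stepMass P ξ 1)⁻¹ * ∑' i : ℕ, if (i : ℤ) + c i < 0 then stepMass P ξ (c i) else 0 := by
  have hdisj : Pairwise (Function.onFun Disjoint fun x : ℕ × ℕ => exitAt ξ x.1 x.2 (c x.2)) :=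
    fun x y hxy => Set.disjoint_left.2 fun ω ⟨hx, hxi, _⟩ ⟨hy, hyi, _⟩ => by
      obtain h1 : x.1 = y.1 := by omega
      rw [h1] at hxi
      exact hxy (Prod.ext h1 (by omega))
  rw [measure_iUnion hdisj fun x => measurableSet_exitAt hmeas _ _ _,
    ENNReal.tsum_prod (f := fun m (i : ℕ) => P (exitAt ξ m i (c i))),
    ENNReal.tsum_comm, ← ENNReal.tsum_mul_left]
  refine tsum_congr fun i => ?_
  simp_rw [measure_exitAt hmeas hident hindep]
  split_ifs
  · rw [ENNReal.tsum_mul_right, ← green, hgreen]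
  · simp

lemma measure_undershoot_eq (hgreen : ∀ i : ℕ, green P ξ i = (stepMass P ξ 1)⁻¹) {k : ℤ}
    (hk : 1 ≤ k) : P {ω | -walk ξ (firstNeg ξ ω) ω = k} =
      (stepMass P ξ 1)⁻¹ * P (ξ 0 ⁻¹' Set.Iic (-k)) := by
  rw [setOf_undershoot_eq hk, measure_iUnion_exitAt hmeas hident hindep hgreen fun i => -k - i,
    ← tail_stepMass (hmeas 0)]
  exact congrArg _ (tsum_congr fun i => if_pos (by omega))

lemma measure_jump_eq (hgreen : ∀ i : ℕ, green P ξ i = (stepMass P ξ 1)⁻¹) {k : ℤ}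
    (hk : 1 ≤ k) : P {ω | walk ξ (firstNeg ξ ω - 1) ω - walk ξ (firstNeg ξ ω) ω = k} =
      (stepMass P ξ 1)⁻¹ * (k.toNat * stepMass P ξ (-k)) := by
  rw [setOf_jump_eq hk, measure_iUnion_exitAt hmeas hident hindep hgreen fun _ => -k,
    tsum_eq_sum (s := range k.toNat) fun i hi => if_neg (by simp only [mem_range] at hi; omega),
    sum_congr rfl fun i hi => if_pos (by simp only [mem_range] at hi; omega),
    sum_const, card_range, nsmul_eq_mul]

end IID

end Probability

end SkipFreeWalk

open SkipFreeWalk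

theorem undershoot_and_jump_law_general
    {Ω : Type*} [MeasurableSpace Ω] (P : Measure Ω) [IsProbabilityMeasure P]
    (ξ : ℕ → Ω → ℤ) (hmeas : ∀ i, Measurable (ξ i))
    (hindep : iIndepFun ξ P)
    (hident : ∀ i, P.map (ξ i) = P.map (ξ 0))
    (hint : Integrable (fun ω => ((ξ 0 ω : ℤ) : ℝ)) P)
    (hcentered : ∫ ω, ((ξ 0 ω : ℤ) : ℝ) ∂P = 0)
    (hskipfree : P {ω | 2 ≤ ξ 0 ω} = 0)
    (hup : 0 < P {ω | ξ 0 ω = 1})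
    (S : ℕ → Ω → ℤ) (hS : ∀ n ω, S n ω = ∑ i ∈ Finset.range n, ξ i ω)
    (T : Ω → ℕ) (hT : ∀ ω, T ω = sInf {n : ℕ | S n ω < 0})
    (H L : Ω → ℤ)
    (hH : ∀ ω, H ω = -S (T ω) ω)
    (hL : ∀ ω, L ω = S (T ω - 1) ω - S (T ω) ω) :
    ∀ k : ℤ, 1 ≤ k →
      (P {ω | H ω = k}).toReal =
        (P {ω | ξ 0 ω ≤ -k}).toReal / (P {ω | ξ 0 ω = 1}).toReal ∧
      (P {ω | L ω = k}).toReal =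
        (k : ℝ) * (P {ω | ξ 0 ω = -k}).toReal / (P {ω | ξ 0 ω = 1}).toReal := by
  intro k hk
  obtain rfl : S = walk ξ := funext₂ hS
  obtain rfl : T = firstNeg ξ := funext hT
  obtain rfl : H = fun ω => -walk ξ (firstNeg ξ ω) ω := funext hH
  obtain rfl : L = fun ω => walk ξ (firstNeg ξ ω - 1) ω - walk ξ (firstNeg ξ ω) ω := funext hL
  have hgreen := green_eq_inv hmeas hident hindep hint hcentered hskipfree hup.ne'
  have hkℝ : (k.toNat : ℝ) = k := by exact_mod_cast Int.toNat_of_nonneg (by omega)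
  refine ⟨?_, ?_⟩
  · rw [measure_undershoot_eq hmeas hident hindep hgreen hk, ENNReal.toReal_mul,
      ENNReal.toReal_inv, div_eq_inv_mul]
    rfl
  · change _ = (k : ℝ) * (stepMass P ξ (-k)).toReal / (stepMass P ξ 1).toReal
    rw [measure_jump_eq hmeas hident hindep hgreen hk, ENNReal.toReal_mul, ENNReal.toReal_mul,
      ENNReal.toReal_inv, ENNReal.toReal_natCast, hkℝ]
    ring

/-- Laws of the undershoot `H = -S_T` and of the size `L = S_{T-} - S_T` of the jump at the
first passage time `T` below `0` of a centered right-continuous (skip-free upward) random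
walk: for `k ≥ 1`, `P(H = k) = P(ξ ≤ -k)/P(ξ = 1)` and `P(L = k) = k P(ξ = -k)/P(ξ = 1)`. -/
theorem undershoot_and_jump_law
    {Ω : Type*} [MeasurableSpace Ω] (P : Measure Ω) [IsProbabilityMeasure P]
    (ξ : ℕ → Ω → ℤ) (hmeas : ∀ i, Measurable (ξ i))
    (hindep : iIndepFun ξ P)
    (hident : ∀ i, P.map (ξ i) = P.map (ξ 0))
    (hint : Integrable (fun ω => ((ξ 0 ω : ℤ) : ℝ)) P)
    (hcentered : ∫ ω, ((ξ 0 ω : ℤ) : ℝ) ∂P = 0)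
    (hskipfree : P {ω | 2 ≤ ξ 0 ω} = 0)
    (hup : 0 < P {ω | ξ 0 ω = 1})
    (hnotzero : P {ω | ξ 0 ω = 0} < 1)
    (S : ℕ → Ω → ℤ) (hS : ∀ n ω, S n ω = ∑ i ∈ Finset.range n, ξ i ω)
    (T : Ω → ℕ) (hT : ∀ ω, T ω = sInf {n : ℕ | S n ω < 0})
    (H L : Ω → ℤ)
    (hH : ∀ ω, H ω = -S (T ω) ω)
    (hL : ∀ ω, L ω = S (T ω - 1) ω - S (T ω) ω) :
    ∀ k : ℤ, 1 ≤ k →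
      (P {ω | H ω = k}).toReal =
        (P {ω | ξ 0 ω ≤ -k}).toReal / (P {ω | ξ 0 ω = 1}).toReal ∧
      (P {ω | L ω = k}).toReal =
        (k : ℝ) * (P {ω | ξ 0 ω = -k}).toReal / (P {ω | ξ 0 ω = 1}).toReal :=
  undershoot_and_jump_law_general P ξ hmeas hindep hident hint hcentered hskipfree hup S hS T hT H L
    hH hL
end

section
/- Harris inequality for random walks, with a conditioned variant. Call a set of trajectories A ⊆ ℤ^ℕ increasing if, whenever x = (x_i) and y = (y_i) satisfy x_0 = y_0 and x_{i+1} − x_i ≤ y_{i+1} − y_i for all i, x ∈ A implies y ∈ A. Let S = (S_n)_{n∈ℕ} be a random walk with i.i.d. increments started from a deterministic point S_0 = x_0. Then: (i) for any two increasing events A and B, P(S ∈ A, S ∈ B) ≥ P(S ∈ A)·P(S ∈ B); (ii) if x_0 > 0 and A, B are increasing events depending only on (S_0, …, S_n), then for every N ≥ n with P(min_{k≤N} S_k > 0) > 0, P(S ∈ A, S ∈ B | min_{k≤N} S_k > 0) ≥ P(S ∈ A | min_{k≤N} S_k > 0)·P(S ∈ B); consequently the same inequality holds for the law of S conditioned to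 stay positive obtained as the N → ∞ limit of these conditionings. -/
open MeasureTheory ProbabilityTheory Filter

/-- A set of trajectories `A ⊆ ℤ^ℕ` is increasing (for the canonical partial order on
increments) if whenever `x 0 = y 0` and `x (i+1) - x i ≤ y (i+1) - y i` for all `i`,
`x ∈ A` implies `y ∈ A`. -/
def IncreasingTrajSet (A : Set (ℕ → ℤ)) : Prop :=
  ∀ x y : ℕ → ℤ, x 0 = y 0 → (∀ i, x (i + 1) - x i ≤ y (i + 1) - y i) → x ∈ A → y ∈ A

/-!
Harris' inequality `∫ f * ∫ g ≤ ∫ f g` for monotone `f, g` holds for a probability measure on a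
linear order by Chebyshev's argument (integrate `(f x - f y) (g x - g y) ≥ 0` against `μ ⊗ μ`),
and passes to finite products by Fubini, since integrating out some coordinates keeps
monotonicity in the others. On an infinite product, the conditional probability of an increasing
event given finitely many coordinates is a monotone function of these coordinates, so
approximating `B` by a cylinder yields `P(A) P(B) ≤ P(A ∩ B) + ε`.

The trajectory of the walk is a monotone function of its independent increments, hence increasing
trajectory events are increasing events of the increments. The conditioned inequality is the
unconditioned one for `A ∩ {S_0, …, S_N > 0}` and `B`, and it survives the limit `N → ∞`.
-/

open scoped ENNReal

theorem ENNReal.mul_add_mul_le_mul_add_mul {a b c d : ℝ≥0∞} (hab : a ≤ b) (hcd : c ≤ d) :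
    a * d + b * c ≤ a * c + b * d := by
  obtain ⟨e, rfl⟩ := exists_add_of_le hcd
  calc a * (c + e) + b * c = a * c + b * c + a * e := by ring
    _ ≤ a * c + b * c + b * e := by gcongr
    _ = a * c + b * (c + e) := by ring

theorem Monovary.mul_add_mul_le_mul_add_mul_ennreal {ι : Type*} {f g : ι → ℝ≥0∞}
    (hfg : Monovary f g) (i j : ι) : f i * g j + f j * g i ≤ f i * g i + f j * g j := by
  rcases lt_trichotomy (g i) (g j) with h | h | h
  · exact ENNReal.mul_add_mul_le_mul_add_mul (hfg h) h.le
  · rw [h]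
  · rw [add_comm (f i * g j), add_comm (f i * g i)]
    exact ENNReal.mul_add_mul_le_mul_add_mul (hfg h) h.le

theorem Monovary.lintegral_mul_lintegral_le_lintegral_mul {α : Type*} [MeasurableSpace α]
    {μ : Measure α} [IsProbabilityMeasure μ] {f g : α → ℝ≥0∞} (hfg : Monovary f g)
    (hf : Measurable f) (hg : Measurable g) :
    (∫⁻ x, f x ∂μ) * ∫⁻ x, g x ∂μ ≤ ∫⁻ x, f x * g x ∂μ := by
  have hcross : ∫⁻ z, (f z.1 * g z.2 + f z.2 * g z.1) ∂μ.prod μ =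
      2 * ((∫⁻ x, f x ∂μ) * ∫⁻ x, g x ∂μ) := by
    rw [lintegral_add_left (by fun_prop), lintegral_prod_mul hf.aemeasurable hg.aemeasurable]
    simp_rw [mul_comm (f _) (g _)]
    rw [lintegral_prod_mul hg.aemeasurable hf.aemeasurable]
    ring
  have hdiag : ∫⁻ z, (f z.1 * g z.1 + f z.2 * g z.2) ∂μ.prod μ = 2 * ∫⁻ x, f x * g x ∂μ := by
    rw [lintegral_add_left (by fun_prop), lintegral_prod _ (by fun_prop),
      lintegral_prod _ (by fun_prop)]
    simp [two_mul]
  have h2 := lintegral_mono (μ := μ.prod μ) fun z =>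
    hfg.mul_add_mul_le_mul_add_mul_ennreal z.1 z.2
  rw [hcross, hdiag] at h2
  exact (ENNReal.mul_le_mul_iff_right two_ne_zero ENNReal.ofNat_ne_top).mp h2

def HasHarrisInequality {α : Type*} [MeasurableSpace α] [Preorder α] (μ : Measure α) : Prop :=
  ∀ f g : α → ℝ≥0∞, Measurable f → Measurable g → Monotone f → Monotone g →
    (∫⁻ x, f x ∂μ) * ∫⁻ x, g x ∂μ ≤ ∫⁻ x, f x * g x ∂μ

namespace HasHarrisInequality

variable {α β : Type*} [MeasurableSpace α] [MeasurableSpace β]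

theorem of_linearOrder [LinearOrder α] (μ : Measure α) [IsProbabilityMeasure μ] :
    HasHarrisInequality μ :=
  fun _ _ hf hg hfm hgm => (hfm.monovary hgm).lintegral_mul_lintegral_le_lintegral_mul hf hg

theorem dirac [Preorder α] (a : α) : HasHarrisInequality (Measure.dirac a) := by
  intro f g hf hg _ _
  rw [lintegral_dirac' a hf, lintegral_dirac' a hg,
    lintegral_dirac' a (by fun_prop : Measurable fun x => f x * g x)]

theorem map [Preorder α] [Preorder β] {μ : Measure α} (hμ : HasHarrisInequality μ) {e : α → β}
    (he : Measurable e) (he' : Monotone e) : HasHarrisInequality (μ.map e) := by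
  intro f g hf hg hfm hgm
  rw [lintegral_map hf he, lintegral_map hg he,
    lintegral_map (by fun_prop : Measurable fun x => f x * g x) he]
  exact hμ _ _ (hf.comp he) (hg.comp he) (hfm.comp he') (hgm.comp he')

theorem prod [Preorder α] [Preorder β] {μ : Measure α} {ν : Measure β} [SFinite μ] [SFinite ν]
    (hμ : HasHarrisInequality μ) (hν : HasHarrisInequality ν) :
    HasHarrisInequality (μ.prod ν) := by
  intro f g hf hg hfm hgm
  have hsec : ∀ {h : α × β → ℝ≥0∞}, Monotone h → ∀ a, Monotone fun b => h (a, b) :=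
    fun hm a _ _ hb => hm (Prod.mk_le_mk.2 ⟨le_rfl, hb⟩)
  have hfib : ∀ {h : α × β → ℝ≥0∞}, Monotone h → Monotone fun a => ∫⁻ b, h (a, b) ∂ν :=
    fun hm _ _ ha => lintegral_mono fun b => hm (Prod.mk_le_mk.2 ⟨ha, le_rfl⟩)
  rw [lintegral_prod _ hf.aemeasurable, lintegral_prod _ hg.aemeasurable,
    lintegral_prod (fun z => f z * g z) (by fun_prop)]
  calc (∫⁻ a, ∫⁻ b, f (a, b) ∂ν ∂μ) * ∫⁻ a, ∫⁻ b, g (a, b) ∂ν ∂μ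
      ≤ ∫⁻ a, (∫⁻ b, f (a, b) ∂ν) * ∫⁻ b, g (a, b) ∂ν ∂μ :=
        hμ _ _ hf.lintegral_prod_right' hg.lintegral_prod_right' (hfib hfm) (hfib hgm)
    _ ≤ ∫⁻ a, ∫⁻ b, f (a, b) * g (a, b) ∂ν ∂μ := lintegral_mono fun a =>
        hν _ _ (hf.comp measurable_prodMk_left) (hg.comp measurable_prodMk_left)
          (hsec hfm a) (hsec hgm a)

theorem pi_fin {n : ℕ} {α : Fin n → Type*} [∀ i, MeasurableSpace (α i)] [∀ i, Preorder (α i)]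
    {μ : ∀ i, Measure (α i)} [∀ i, SigmaFinite (μ i)] (hμ : ∀ i, HasHarrisInequality (μ i)) :
    HasHarrisInequality (Measure.pi μ) := by
  induction n with
  | zero => rw [Measure.pi_of_empty μ]; exact dirac _
  | succ n ih =>
    rw [← (measurePreserving_piFinSuccAbove μ 0).symm.map_eq]
    refine ((hμ 0).prod (ih fun j => hμ j.succ)).map (MeasurableEquiv.measurable _) ?_
    intro p q hpq i
    simp only [MeasurableEquiv.piFinSuccAbove_symm_apply, Fin.insertNthEquiv, Equiv.coe_fn_mk]
    cases i using Fin.cases with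
    | zero => rw [Fin.insertNth_apply_same, Fin.insertNth_apply_same]; exact hpq.1
    | succ j =>
      rw [← Fin.zero_succAbove, Fin.insertNth_apply_succAbove, Fin.insertNth_apply_succAbove]
      exact hpq.2 j

theorem pi {ι : Type*} [Fintype ι] {α : ι → Type*} [∀ i, MeasurableSpace (α i)]
    [∀ i, Preorder (α i)] {μ : ∀ i, Measure (α i)} [∀ i, SigmaFinite (μ i)]
    (hμ : ∀ i, HasHarrisInequality (μ i)) : HasHarrisInequality (Measure.pi μ) := by
  let e := (Fintype.equivFin ι).symm
  rw [← (measurePreserving_piCongrLeft μ e).map_eq]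
  refine (pi_fin fun j => hμ (e j)).map (MeasurableEquiv.measurable _) fun p q hpq i => ?_
  obtain ⟨j, rfl⟩ := e.surjective i
  simpa [MeasurableEquiv.coe_piCongrLeft, Equiv.piCongrLeft_apply_apply] using hpq j

end HasHarrisInequality

theorem Function.monotone_updateFinset {ι : Type*} {α : ι → Type*} [∀ i, Preorder (α i)]
    [DecidableEq ι] (y : Π i, α i) (s : Finset ι) : Monotone (Function.updateFinset y s) := by
  intro z z' h i
  simp only [Function.updateFinset]
  split_ifs
  exacts [h _, le_rfl]

section InfinitePi

open Measure Function

variable {ι : Type*} {α : ι → Type*} [∀ i, MeasurableSpace (α i)] (μ : ∀ i, Measure (α i))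
  [DecidableEq ι] (s : Finset ι)

noncomputable def infinitePiCondProb (E : Set (Π i, α i)) (z : Π i : s, α i) : ℝ≥0∞ :=
  infinitePi μ {y | updateFinset y s z ∈ E}

variable {E : Set (Π i, α i)}

theorem IsUpperSet.monotone_infinitePiCondProb [∀ i, Preorder (α i)] (hE : IsUpperSet E) :
    Monotone (infinitePiCondProb μ s E) := fun _ _ hz =>
  measure_mono fun y hy => hE (monotone_updateFinset y s hz) hy

variable [∀ i, IsProbabilityMeasure (μ i)]

theorem measurePreserving_updateFinset_infinitePi :
    MeasurePreserving (fun p : (Π i : s, α i) × (Π i, α i) => updateFinset p.2 s p.1)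
      ((Measure.pi fun i : s => μ i).prod (infinitePi μ)) (infinitePi μ) := by
  refine ⟨by fun_prop, (eq_infinitePi μ fun u t ht => ?_)⟩
  have hpre : (fun p : (Π i : s, α i) × (Π i, α i) => updateFinset p.2 s p.1) ⁻¹' Set.pi u t =
      (Set.pi Set.univ fun i : s => if (i : ι) ∈ u then t i else Set.univ) ×ˢ
        Set.pi (u.filter (· ∉ s) : Set ι) t := by
    ext ⟨z, y⟩
    simp only [Set.mem_preimage, Set.mem_pi, Finset.mem_coe, Set.mem_prod, Set.mem_univ,
      true_implies, Finset.mem_filter, and_imp, updateFinset]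
    constructor
    · intro h
      refine ⟨fun i => ?_, fun i hiu his => by simpa [his] using h i hiu⟩
      split_ifs with hiu
      · simpa [i.2] using h i hiu
      · trivial
    · rintro ⟨h1, h2⟩ i hiu
      by_cases his : i ∈ s
      · simpa [his, hiu] using h1 ⟨i, his⟩
      · simpa [his] using h2 i hiu his
  rw [map_apply (by fun_prop) (.pi u.countable_toSet fun i _ => ht i), hpre, prod_prod, pi_pi,
    infinitePi_pi μ fun i _ => ht i, ← Finset.prod_filter_mul_prod_filter_not u (· ∈ s)]
  congr 1
  rw [Finset.prod_coe_sort s fun i => μ i (if i ∈ u then t i else Set.univ),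
    Finset.filter_mem_eq_inter, Finset.inter_comm, ← Finset.filter_mem_eq_inter,
    Finset.prod_filter]
  refine Finset.prod_congr rfl fun i _ => ?_
  split_ifs <;> simp

theorem measurable_infinitePiCondProb (hE : MeasurableSet E) :
    Measurable (infinitePiCondProb μ s E) :=
  measurable_measure_prodMk_left ((measurePreserving_updateFinset_infinitePi μ s).measurable hE)

theorem infinitePiCondProb_le_one (z : Π i : s, α i) : infinitePiCondProb μ s E z ≤ 1 :=
  prob_le_one

theorem setLIntegral_infinitePiCondProb (hE : MeasurableSet E) {D : Set (Π i : s, α i)}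
    (hD : MeasurableSet D) :
    ∫⁻ z in D, infinitePiCondProb μ s E z ∂Measure.pi (fun i : s => μ i) =
      infinitePi μ (E ∩ cylinder s D) := by
  have hED : MeasurableSet (E ∩ cylinder s D) := hE.inter hD.cylinder
  have hΦ := measurePreserving_updateFinset_infinitePi μ s
  rw [← hΦ.measure_preimage hED.nullMeasurableSet, Measure.prod_apply (hΦ.measurable hED),
    ← lintegral_indicator hD]
  refine lintegral_congr fun z => ?_
  by_cases hz : z ∈ D <;> simp [infinitePiCondProb, hz, Set.preimage, restrict_updateFinset]

theorem lintegral_infinitePiCondProb (hE : MeasurableSet E) :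
    ∫⁻ z, infinitePiCondProb μ s E z ∂Measure.pi (fun i : s => μ i) = infinitePi μ E := by
  simpa using setLIntegral_infinitePiCondProb μ s hE MeasurableSet.univ

end InfinitePi

theorem measure_inter_add_measure_diff_le {Ω : Type*} [MeasurableSpace Ω] (μ : Measure Ω)
    (A : Set Ω) {B C : Set Ω} (hB : MeasurableSet B) (hC : MeasurableSet C) :
    μ (A ∩ C) + μ (B \ C) ≤ μ (A ∩ B) + μ (symmDiff C B) := by
  calc μ (A ∩ C) + μ (B \ C) ≤ μ (A ∩ B) + μ (C \ B) + μ (B \ C) := by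
        gcongr
        exact (measure_mono fun x hx => by by_cases hxB : x ∈ B <;> simp_all).trans
          (measure_union_le _ _)
    _ = μ (A ∩ B) + μ (symmDiff C B) := by
        rw [add_assoc, measure_symmDiff_eq hC.nullMeasurableSet hB.nullMeasurableSet]

open Measure in
theorem IsUpperSet.infinitePi_mul_le_infinitePi_inter {ι : Type*} {α : ι → Type*}
    [∀ i, MeasurableSpace (α i)] [∀ i, Preorder (α i)] {μ : ∀ i, Measure (α i)}
    [∀ i, IsProbabilityMeasure (μ i)] (hμ : ∀ i, HasHarrisInequality (μ i))
    {A B : Set (Π i, α i)} (hAu : IsUpperSet A) (hBu : IsUpperSet B) (hA : MeasurableSet A)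
    (hB : MeasurableSet B) : infinitePi μ A * infinitePi μ B ≤ infinitePi μ (A ∩ B) := by
  classical
  refine ENNReal.le_of_forall_pos_le_add fun ε hε _ => ?_
  -- Only `B` is approximated by a cylinder: on it `b ≤ 1` is used, off it `a ≤ 1`.
  obtain ⟨t, ht, htB⟩ := exists_measure_symmDiff_lt_of_generateFrom_isSetRing
    (μ := infinitePi μ) isSetRing_measurableCylinders
    ⟨{Set.univ}, Set.countable_singleton _, by simpa using univ_mem_measurableCylinders α,
      by simp⟩ generateFrom_measurableCylinders.symm hB (ENNReal.coe_pos.2 hε)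
  obtain ⟨s, S, hS, rfl⟩ := (mem_measurableCylinders t).1 ht
  set π := Measure.pi fun i : s => μ i
  set a := infinitePiCondProb μ s A
  set b := infinitePiCondProb μ s B
  calc infinitePi μ A * infinitePi μ B = (∫⁻ z, a z ∂π) * ∫⁻ z, b z ∂π := by
        rw [lintegral_infinitePiCondProb μ s hA, lintegral_infinitePiCondProb μ s hB]
    _ ≤ ∫⁻ z, a z * b z ∂π :=
        HasHarrisInequality.pi (fun i : s => hμ i) _ _ (measurable_infinitePiCondProb μ s hA)
          (measurable_infinitePiCondProb μ s hB) (hAu.monotone_infinitePiCondProb μ s)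
          (hBu.monotone_infinitePiCondProb μ s)
    _ = (∫⁻ z in S, a z * b z ∂π) + ∫⁻ z in Sᶜ, a z * b z ∂π := (lintegral_add_compl _ hS).symm
    _ ≤ (∫⁻ z in S, a z ∂π) + ∫⁻ z in Sᶜ, b z ∂π := by
        gcongr with z
        · exact mul_le_of_le_one_right' (infinitePiCondProb_le_one μ s z)
        · exact mul_le_of_le_one_left' (infinitePiCondProb_le_one μ s z)
    _ = infinitePi μ (A ∩ cylinder s S) + infinitePi μ (B \ cylinder s S) := by
        rw [setLIntegral_infinitePiCondProb μ s hA hS,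
          setLIntegral_infinitePiCondProb μ s hB hS.compl, ← compl_cylinder, Set.sdiff_eq]
    _ ≤ infinitePi μ (A ∩ B) + infinitePi μ (symmDiff (cylinder s S) B) :=
        measure_inter_add_measure_diff_le _ _ hB hS.cylinder
    _ ≤ infinitePi μ (A ∩ B) + ε := by gcongr

def walkPath (x₀ : ℤ) (v : ℕ → ℤ) : ℕ → ℤ := fun k => x₀ + ∑ i ∈ Finset.range k, v i

theorem measurable_walkPath (x₀ : ℤ) : Measurable (walkPath x₀) :=
  measurable_pi_lambda _ fun _ =>
    (Finset.measurable_sum _ fun i _ => measurable_pi_apply i).const_add _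

theorem IncreasingTrajSet.isUpperSet_preimage_walkPath {A : Set (ℕ → ℤ)}
    (hA : IncreasingTrajSet A) (x₀ : ℤ) : IsUpperSet (walkPath x₀ ⁻¹' A) := fun v w hvw hv =>
  hA _ _ (by simp [walkPath]) (fun i => by simpa [walkPath, Finset.sum_range_succ] using hvw i) hv

theorem IncreasingTrajSet.inter {A B : Set (ℕ → ℤ)} (hA : IncreasingTrajSet A)
    (hB : IncreasingTrajSet B) : IncreasingTrajSet (A ∩ B) := fun x y h0 hxy hx =>
  ⟨hA x y h0 hxy hx.1, hB x y h0 hxy hx.2⟩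

theorem le_of_increments_le {x y : ℕ → ℤ} (h0 : x 0 = y 0)
    (hxy : ∀ i, x (i + 1) - x i ≤ y (i + 1) - y i) (k : ℕ) : x k ≤ y k := by
  induction k with
  | zero => exact h0.le
  | succ k ih => linarith [hxy k]

theorem increasingTrajSet_forall_pos (N : ℕ) : IncreasingTrajSet {x | ∀ k ≤ N, 0 < x k} :=
  fun _ _ h0 hxy hx k hk => (hx k hk).trans_le (le_of_increments_le h0 hxy k)

theorem measurableSet_setOf_forall_pos (N : ℕ) : MeasurableSet {x : ℕ → ℤ | ∀ k ≤ N, 0 < x k} := by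
  simp only [Set.ofPred_forall]
  exact .iInter fun k => .iInter fun _ => measurableSet_lt measurable_const (measurable_pi_apply k)

theorem ProbabilityTheory.iIndepFun.measure_mul_le_measure_inter_of_isUpperSet {ι Ω : Type*}
    [MeasurableSpace Ω] {P : Measure Ω} [IsProbabilityMeasure P] {α : ι → Type*}
    [∀ i, MeasurableSpace (α i)] [∀ i, LinearOrder (α i)] {ξ : ∀ i, Ω → α i}
    (hmeas : ∀ i, Measurable (ξ i)) (hindep : iIndepFun ξ P) {U V : Set (Π i, α i)}
    (hU : IsUpperSet U) (hV : IsUpperSet V) (hUm : MeasurableSet U) (hVm : MeasurableSet V) :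
    P ((fun ω i => ξ i ω) ⁻¹' U) * P ((fun ω i => ξ i ω) ⁻¹' V) ≤
      P ((fun ω i => ξ i ω) ⁻¹' (U ∩ V)) := by
  have _ (i : ι) := Measure.isProbabilityMeasure_map (μ := P) (hmeas i).aemeasurable
  have hX : Measurable fun ω i => ξ i ω := measurable_pi_lambda _ hmeas
  rw [← Measure.map_apply hX hUm, ← Measure.map_apply hX hVm,
    ← Measure.map_apply hX (hUm.inter hVm), hindep.map_fun_eq_infinitePi_map hmeas]
  exact hU.infinitePi_mul_le_infinitePi_inter (fun i => .of_linearOrder _) hV hUm hVm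

theorem ProbabilityTheory.cond_mul_le_cond_inter {Ω : Type*} [MeasurableSpace Ω] {μ : Measure Ω}
    {C E F : Set Ω} (hC : MeasurableSet C) (h : μ (E ∩ C) * μ F ≤ μ (E ∩ C ∩ F)) :
    μ[|C] E * μ F ≤ μ[|C] (E ∩ F) := by
  rw [cond_apply hC, cond_apply hC, mul_assoc, ← Set.inter_assoc, Set.inter_comm C E]
  gcongr

theorem harris_inequality_random_walk_general
    {Ω : Type*} [MeasurableSpace Ω] (P : Measure Ω) [IsProbabilityMeasure P]
    (ξ : ℕ → Ω → ℤ) (hmeas : ∀ i, Measurable (ξ i))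
    (hindep : iIndepFun ξ P)
    (x₀ : ℤ) (S : ℕ → Ω → ℤ)
    (hS : ∀ n ω, S n ω = x₀ + ∑ i ∈ Finset.range n, ξ i ω) :
    -- (i) FKG / Harris inequality for increasing events
    (∀ A B : Set (ℕ → ℤ), MeasurableSet A → MeasurableSet B →
      IncreasingTrajSet A → IncreasingTrajSet B →
      P {ω | (fun n => S n ω) ∈ A} * P {ω | (fun n => S n ω) ∈ B} ≤
        P ({ω | (fun n => S n ω) ∈ A} ∩ {ω | (fun n => S n ω) ∈ B})) ∧
    -- (ii) conditioned variant for events depending only on the first n steps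
    (0 < x₀ → ∀ (n : ℕ) (A B : Set (ℕ → ℤ)), MeasurableSet A → MeasurableSet B →
      IncreasingTrajSet A → IncreasingTrajSet B →
      (∀ x y : ℕ → ℤ, (∀ i ≤ n, x i = y i) → (x ∈ A ↔ y ∈ A)) →
      (∀ x y : ℕ → ℤ, (∀ i ≤ n, x i = y i) → (x ∈ B ↔ y ∈ B)) →
      ∀ N : ℕ, n ≤ N → P {ω | ∀ k ≤ N, 0 < S k ω} ≠ 0 →
        (P[|{ω | ∀ k ≤ N, 0 < S k ω}]) {ω | (fun m => S m ω) ∈ A} *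
            P {ω | (fun m => S m ω) ∈ B} ≤
          (P[|{ω | ∀ k ≤ N, 0 < S k ω}])
            ({ω | (fun m => S m ω) ∈ A} ∩ {ω | (fun m => S m ω) ∈ B})) ∧
    -- consequence for the N → ∞ limit of the conditioned laws
    (0 < x₀ → ∀ (n : ℕ) (A B : Set (ℕ → ℤ)), MeasurableSet A → MeasurableSet B →
      IncreasingTrajSet A → IncreasingTrajSet B →
      (∀ x y : ℕ → ℤ, (∀ i ≤ n, x i = y i) → (x ∈ A ↔ y ∈ A)) →
      (∀ x y : ℕ → ℤ, (∀ i ≤ n, x i = y i) → (x ∈ B ↔ y ∈ B)) →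
      (∀ N, P {ω | ∀ k ≤ N, 0 < S k ω} ≠ 0) →
      ∀ LA LAB : ENNReal,
        Tendsto (fun N : ℕ =>
          (P[|{ω | ∀ k ≤ N, 0 < S k ω}]) {ω | (fun m => S m ω) ∈ A}) atTop (nhds LA) →
        Tendsto (fun N : ℕ =>
          (P[|{ω | ∀ k ≤ N, 0 < S k ω}])
            ({ω | (fun m => S m ω) ∈ A} ∩ {ω | (fun m => S m ω) ∈ B})) atTop (nhds LAB) →
        LA * P {ω | (fun m => S m ω) ∈ B} ≤ LAB) := by
  obtain rfl : S = fun n ω => walkPath x₀ (fun i => ξ i ω) n := funext fun n => funext (hS n)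
  have harris {A B : Set (ℕ → ℤ)} (hA : MeasurableSet A) (hB : MeasurableSet B)
      (hAi : IncreasingTrajSet A) (hBi : IncreasingTrajSet B) :
      P {ω | walkPath x₀ (fun i => ξ i ω) ∈ A} * P {ω | walkPath x₀ (fun i => ξ i ω) ∈ B} ≤
        P ({ω | walkPath x₀ (fun i => ξ i ω) ∈ A} ∩ {ω | walkPath x₀ (fun i => ξ i ω) ∈ B}) :=
    hindep.measure_mul_le_measure_inter_of_isUpperSet hmeas (hAi.isUpperSet_preimage_walkPath x₀)
      (hBi.isUpperSet_preimage_walkPath x₀) (measurable_walkPath x₀ hA) (measurable_walkPath x₀ hB)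
  have hcond (N : ℕ) {A B : Set (ℕ → ℤ)} (hA : MeasurableSet A) (hB : MeasurableSet B)
      (hAi : IncreasingTrajSet A) (hBi : IncreasingTrajSet B) :
      (P[|{ω | walkPath x₀ (fun i => ξ i ω) ∈ {x | ∀ k ≤ N, 0 < x k}}])
          {ω | walkPath x₀ (fun i => ξ i ω) ∈ A} * P {ω | walkPath x₀ (fun i => ξ i ω) ∈ B} ≤
        (P[|{ω | walkPath x₀ (fun i => ξ i ω) ∈ {x | ∀ k ≤ N, 0 < x k}}])
          ({ω | walkPath x₀ (fun i => ξ i ω) ∈ A} ∩ {ω | walkPath x₀ (fun i => ξ i ω) ∈ B}) :=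
    cond_mul_le_cond_inter
      ((measurable_walkPath x₀).comp (measurable_pi_lambda _ hmeas)
        (measurableSet_setOf_forall_pos N))
      (harris (hA.inter (measurableSet_setOf_forall_pos N)) hB
        (hAi.inter (increasingTrajSet_forall_pos N)) hBi)
  refine ⟨fun A B => harris, fun _ n A B hA hB hAi hBi _ _ N _ _ => hcond N hA hB hAi hBi, ?_⟩
  rintro - n A B hA hB hAi hBi - - - LA LAB hLA hLAB
  exact le_of_tendsto_of_tendsto' (ENNReal.Tendsto.mul_const hLA (.inr (measure_ne_top _ _)))
    hLAB fun N => hcond N hA hB hAi hBi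

/-- Harris inequality for a random walk with i.i.d. increments started from a deterministic
point, together with its variant for the walk conditioned to stay positive up to time `N`,
and the consequence for the `N → ∞` limit of these conditionings. -/
theorem harris_inequality_random_walk
    {Ω : Type*} [MeasurableSpace Ω] (P : Measure Ω) [IsProbabilityMeasure P]
    (ξ : ℕ → Ω → ℤ) (hmeas : ∀ i, Measurable (ξ i))
    (hindep : iIndepFun ξ P)
    (hident : ∀ i, P.map (ξ i) = P.map (ξ 0))
    (x₀ : ℤ) (S : ℕ → Ω → ℤ)
    (hS : ∀ n ω, S n ω = x₀ + ∑ i ∈ Finset.range n, ξ i ω) :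
    -- (i) FKG / Harris inequality for increasing events
    (∀ A B : Set (ℕ → ℤ), MeasurableSet A → MeasurableSet B →
      IncreasingTrajSet A → IncreasingTrajSet B →
      P {ω | (fun n => S n ω) ∈ A} * P {ω | (fun n => S n ω) ∈ B} ≤
        P ({ω | (fun n => S n ω) ∈ A} ∩ {ω | (fun n => S n ω) ∈ B})) ∧
    -- (ii) conditioned variant for events depending only on the first n steps
    (0 < x₀ → ∀ (n : ℕ) (A B : Set (ℕ → ℤ)), MeasurableSet A → MeasurableSet B →
      IncreasingTrajSet A → IncreasingTrajSet B →
      (∀ x y : ℕ → ℤ, (∀ i ≤ n, x i = y i) → (x ∈ A ↔ y ∈ A)) →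
      (∀ x y : ℕ → ℤ, (∀ i ≤ n, x i = y i) → (x ∈ B ↔ y ∈ B)) →
      ∀ N : ℕ, n ≤ N → P {ω | ∀ k ≤ N, 0 < S k ω} ≠ 0 →
        (P[|{ω | ∀ k ≤ N, 0 < S k ω}]) {ω | (fun m => S m ω) ∈ A} *
            P {ω | (fun m => S m ω) ∈ B} ≤
          (P[|{ω | ∀ k ≤ N, 0 < S k ω}])
            ({ω | (fun m => S m ω) ∈ A} ∩ {ω | (fun m => S m ω) ∈ B})) ∧
    -- consequence for the N → ∞ limit of the conditioned laws
    (0 < x₀ → ∀ (n : ℕ) (A B : Set (ℕ → ℤ)), MeasurableSet A → MeasurableSet B →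
      IncreasingTrajSet A → IncreasingTrajSet B →
      (∀ x y : ℕ → ℤ, (∀ i ≤ n, x i = y i) → (x ∈ A ↔ y ∈ A)) →
      (∀ x y : ℕ → ℤ, (∀ i ≤ n, x i = y i) → (x ∈ B ↔ y ∈ B)) →
      (∀ N, P {ω | ∀ k ≤ N, 0 < S k ω} ≠ 0) →
      ∀ LA LAB : ENNReal,
        Tendsto (fun N : ℕ =>
          (P[|{ω | ∀ k ≤ N, 0 < S k ω}]) {ω | (fun m => S m ω) ∈ A}) atTop (nhds LA) →
        Tendsto (fun N : ℕ =>
          (P[|{ω | ∀ k ≤ N, 0 < S k ω}])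
            ({ω | (fun m => S m ω) ∈ A} ∩ {ω | (fun m => S m ω) ∈ B})) atTop (nhds LAB) →
        LA * P {ω | (fun m => S m ω) ∈ B} ≤ LAB) :=
  harris_inequality_random_walk_general P ξ hmeas hindep x₀ S hS
end
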